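/- arXiv:math/0608621 — 5 statements merged into one kernel-verified Lean document; each statement's English description precedes it below -/
import Mathlib

section
/- The number of constrained partitions of [n] = {1,...,n} with shape λ = (λ_1,...,λ_ℓ) equals ∏_{j=1}^{ℓ-1} C(Λ_j - ρ_j, λ_j - ρ_j), where Λ_j = λ_j + ... + λ_ℓ. -/
/-- Union of a list of finsets (the ground set covered by the blocks). -/
def blockUnion (B : List (Finset ℕ)) : Finset ℕ := B.foldr (· ∪ ·) ∅

/-- The set of the `m` least elements of a finite set of naturals. -/
def leastElems (m : ℕ) (S : Finset ℕ) : Finset ℕ :=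
  ((S.sort (· ≤ ·)).take m).toFinset

/-- `B` is a constrained partition of `[n] = {1,…,n}` with respect to `ρ`:
an ordered partition into nonempty blocks such that block `k` contains the
`ρ k` least elements of the union of blocks `k, k+1, …`. -/
def IsConstrainedPartition (ρ : ℕ → ℕ) (n : ℕ) (B : List (Finset ℕ)) : Prop :=
  (∀ b ∈ B, b ≠ ∅) ∧ B.Pairwise Disjoint ∧ blockUnion B = Finset.Icc 1 n ∧
    ∀ k < B.length, leastElems (ρ k) (blockUnion (B.drop k)) ⊆ B.getD k ∅

lemma blockUnion_cons (b : Finset ℕ) (B : List (Finset ℕ)) :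
    blockUnion (b :: B) = b ∪ blockUnion B := rfl

lemma subset_blockUnion {B : List (Finset ℕ)} {b : Finset ℕ} (hb : b ∈ B) :
    b ⊆ blockUnion B := by
  induction B with
  | nil => simp at hb
  | cons a B ih =>
    rw [blockUnion_cons]
    rcases List.mem_cons.1 hb with h | h
    · subst h; exact Finset.subset_union_left
    · exact (ih h).trans Finset.subset_union_right

lemma disjoint_blockUnion {b : Finset ℕ} {B : List (Finset ℕ)}
    (h : ∀ c ∈ B, Disjoint b c) : Disjoint b (blockUnion B) := by
  induction B with
  | nil => simp [blockUnion]
  | cons a B ih =>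
    rw [blockUnion_cons, Finset.disjoint_union_right]
    exact ⟨h a (by simp), ih fun c hc => h c (by simp [hc])⟩

lemma leastElems_subset (m : ℕ) (S : Finset ℕ) : leastElems m S ⊆ S := by
  intro x hx
  simp only [leastElems, List.mem_toFinset] at hx
  exact (Finset.mem_sort _).1 (List.mem_of_mem_take hx)

lemma leastElems_card {m : ℕ} {S : Finset ℕ} (h : m ≤ S.card) :
    (leastElems m S).card = m := by
  rw [leastElems, List.toFinset_card_of_nodup
    (((Finset.sort_nodup (s := S) (r := fun x1 x2 => x1 ≤ x2))).sublist (List.take_sublist _ _)), List.length_take,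
    Finset.length_sort]
  omega

lemma finite_lists (S : Finset ℕ) (m : ℕ) :
    {B : List (Finset ℕ) | (∀ b ∈ B, b ⊆ S) ∧ B.length = m}.Finite := by
  induction m with
  | zero =>
    apply Set.Finite.subset (Set.finite_singleton ([] : List (Finset ℕ)))
    rintro B ⟨-, hB⟩
    simp [List.length_eq_zero_iff.1 hB]
  | succ m ih =>
    apply Set.Finite.subset (Set.Finite.image
      (fun p : Finset ℕ × List (Finset ℕ) => p.1 :: p.2)
      (Set.Finite.prod (S.powerset.finite_toSet) ih))
    rintro B ⟨h1, h2⟩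
    cases B with
    | nil => simp at h2
    | cons b B' =>
      exact ⟨(b, B'), ⟨by simpa using h1 b (by simp),
        fun c hc => h1 c (by simp [hc]), by simpa using h2⟩, rfl⟩

lemma count_finite (ρ : ℕ → ℕ) (S : Finset ℕ) (lam : List ℕ) :
    {B : List (Finset ℕ) | (∀ b ∈ B, b ≠ ∅) ∧ B.Pairwise Disjoint ∧
        blockUnion B = S ∧
        (∀ k < B.length, leastElems (ρ k) (blockUnion (B.drop k)) ⊆ B.getD k ∅) ∧
        B.map Finset.card = lam}.Finite := by
  apply (finite_lists S lam.length).subset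
  rintro B ⟨-, -, h3, -, h5⟩
  exact ⟨fun b hb => h3 ▸ subset_blockUnion hb, by rw [← h5, List.length_map]⟩

lemma ncard_cons_fibered (A : Finset (Finset ℕ)) (F : Finset ℕ → Set (List (Finset ℕ)))
    (hfin : ∀ b ∈ A, (F b).Finite) (c : ℕ) (hc : ∀ b ∈ A, (F b).ncard = c) :
    {B : List (Finset ℕ) | ∃ b ∈ A, ∃ B' ∈ F b, B = b :: B'}.Finite ∧
    {B : List (Finset ℕ) | ∃ b ∈ A, ∃ B' ∈ F b, B = b :: B'}.ncard = A.card * c := by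
  induction A using Finset.induction_on with
  | empty => simp
  | @insert a A ha ih =>
    have hset : {B : List (Finset ℕ) | ∃ b ∈ insert a A, ∃ B' ∈ F b, B = b :: B'} =
        ((fun B' => a :: B') '' F a) ∪
          {B : List (Finset ℕ) | ∃ b ∈ A, ∃ B' ∈ F b, B = b :: B'} := by
      ext B
      simp only [Set.mem_setOf_eq, Set.mem_union, Set.mem_image, Finset.mem_insert]
      constructor
      · rintro ⟨b, (rfl | hb), B', hB', rfl⟩
        · exact Or.inl ⟨B', hB', rfl⟩
        · exact Or.inr ⟨b, hb, B', hB', rfl⟩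
      · rintro (⟨B', hB', rfl⟩ | ⟨b, hb, B', hB', rfl⟩)
        · exact ⟨a, Or.inl rfl, B', hB', rfl⟩
        · exact ⟨b, Or.inr hb, B', hB', rfl⟩
    have hinj : Function.Injective (fun B' : List (Finset ℕ) => a :: B') := by
      intro x y h; simpa using h
    obtain ⟨ihfin, ihcard⟩ := ih (fun b hb => hfin b (by simp [hb]))
      (fun b hb => hc b (by simp [hb]))
    have hdisj : Disjoint ((fun B' => a :: B') '' F a)
        {B : List (Finset ℕ) | ∃ b ∈ A, ∃ B' ∈ F b, B = b :: B'} := by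
      rw [Set.disjoint_left]
      rintro B ⟨B', -, rfl⟩ ⟨b, hb, B'', -, heq⟩
      have : a = b := by simpa using congrArg (List.headI) heq
      exact ha (this ▸ hb)
    have hfa : ((fun B' => a :: B') '' F a).Finite :=
      (hfin a (by simp)).image _
    refine ⟨hset ▸ hfa.union ihfin, ?_⟩
    rw [hset, Set.ncard_union_eq hdisj hfa ihfin,
      Set.ncard_image_of_injective _ hinj, hc a (by simp), ihcard,
      Finset.card_insert_of_notMem ha]
    ring

lemma mem_A_iff {S L b : Finset ℕ} {x : ℕ} (hLS : L ⊆ S) (hLx : L.card ≤ x) :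
    b ∈ ((S \ L).powersetCard (x - L.card)).image (· ∪ L) ↔
      b ⊆ S ∧ b.card = x ∧ L ⊆ b := by
  constructor
  · intro hb
    obtain ⟨c, hc, rfl⟩ := Finset.mem_image.1 hb
    rw [Finset.mem_powersetCard] at hc
    obtain ⟨hcS, hccard⟩ := hc
    have hdisj : Disjoint c L := (Finset.sdiff_disjoint).mono_left hcS
    refine ⟨Finset.union_subset (hcS.trans (Finset.sdiff_subset)) hLS, ?_,
      Finset.subset_union_right⟩
    rw [Finset.card_union_of_disjoint hdisj, hccard]
    omega
  · rintro ⟨hbS, hbx, hLb⟩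
    refine Finset.mem_image.2 ⟨b \ L, ?_, Finset.sdiff_union_of_subset hLb⟩
    rw [Finset.mem_powersetCard]
    exact ⟨Finset.sdiff_subset_sdiff hbS le_rfl, by rw [Finset.card_sdiff_of_subset hLb, hbx]⟩

lemma card_A (S L : Finset ℕ) (m : ℕ) :
    (((S \ L).powersetCard m).image (· ∪ L)).card = ((S \ L).card).choose m := by
  rw [Finset.card_image_of_injOn, Finset.card_powersetCard]
  intro c1 h1 c2 h2 h
  rw [Finset.mem_coe, Finset.mem_powersetCard] at h1 h2
  have d1 : Disjoint c1 L := (Finset.sdiff_disjoint).mono_left h1.1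
  have d2 : Disjoint c2 L := (Finset.sdiff_disjoint).mono_left h2.1
  have h' : c1 ∪ L = c2 ∪ L := h
  have : (c1 ∪ L) \ L = (c2 ∪ L) \ L := by rw [h']
  rwa [Finset.union_sdiff_cancel_right d1, Finset.union_sdiff_cancel_right d2] at this

lemma count_general : ∀ (lam : List ℕ) (ρ : ℕ → ℕ) (S : Finset ℕ),
    lam ≠ [] → lam.sum = S.card → (∀ x ∈ lam, 0 < x) →
    (∀ j, j + 1 < lam.length → ρ j ≤ lam.getD j 0) →
    Set.ncard {B : List (Finset ℕ) | (∀ b ∈ B, b ≠ ∅) ∧ B.Pairwise Disjoint ∧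
        blockUnion B = S ∧
        (∀ k < B.length, leastElems (ρ k) (blockUnion (B.drop k)) ⊆ B.getD k ∅) ∧
        B.map Finset.card = lam} =
      ∏ j ∈ Finset.range (lam.length - 1),
        Nat.choose ((lam.drop j).sum - ρ j) (lam.getD j 0 - ρ j) := by
  intro lam
  induction lam with
  | nil => intro _ _ h; exact absurd rfl h
  | cons x t ih =>
    intro ρ S _ hsum hpos hcon
    rcases eq_or_ne t [] with rfl | ht
    · -- base case: single block
      have hSx : S.card = x := by simpa using hsum.symm
      have hkey : {B : List (Finset ℕ) | (∀ b ∈ B, b ≠ ∅) ∧ B.Pairwise Disjoint ∧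
          blockUnion B = S ∧
          (∀ k < B.length, leastElems (ρ k) (blockUnion (B.drop k)) ⊆ B.getD k ∅) ∧
          B.map Finset.card = [x]} = {[S]} := by
        ext B
        simp only [Set.mem_setOf_eq, Set.mem_singleton_iff]
        constructor
        · rintro ⟨h1, h2, h3, h4, h5⟩
          cases B with
          | nil => simp at h5
          | cons b B' =>
            cases B' with
            | nil =>
              have hb : b = S := by
                rw [← h3, blockUnion_cons]; simp [blockUnion]
              rw [hb]
            | cons c B'' => simp at h5
        · rintro rfl
          have hSne : S ≠ ∅ := by
            have : 0 < S.card := hSx ▸ hpos x (by simp)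
            exact (Finset.card_pos.mp this).ne_empty
          refine ⟨?_, by simp, by simp [blockUnion], ?_, by simp [hSx]⟩
          · intro b hb
            simp only [List.mem_singleton] at hb
            subst hb; exact hSne
          · intro k hk
            have hk0 : k = 0 := by simpa [Nat.lt_one_iff] using hk
            subst hk0
            simpa [blockUnion] using leastElems_subset (ρ 0) S
      rw [hkey]
      simp
    · -- inductive step
      have htlen : 0 < t.length := List.length_pos_iff.2 ht
      have hx : ρ 0 ≤ x := by simpa using hcon 0 (by simpa using htlen)
      have hxpos : 0 < x := hpos x (by simp)
      have htsum : 0 < t.sum := List.sum_pos t (fun y hy => hpos y (by simp [hy])) ht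
      have hScard : S.card = x + t.sum := by simpa using hsum.symm
      have hρS : ρ 0 ≤ S.card := by omega
      set L := leastElems (ρ 0) S with hL
      have hLS : L ⊆ S := leastElems_subset _ _
      have hLcard : L.card = ρ 0 := leastElems_card hρS
      have hLx : L.card ≤ x := by omega
      set A : Finset (Finset ℕ) := ((S \ L).powersetCard (x - L.card)).image (· ∪ L)
        with hA
      set F : Finset ℕ → Set (List (Finset ℕ)) := fun b =>
        {B' : List (Finset ℕ) | (∀ c ∈ B', c ≠ ∅) ∧ B'.Pairwise Disjoint ∧
          blockUnion B' = S \ b ∧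
          (∀ k < B'.length,
            leastElems (ρ (k+1)) (blockUnion (B'.drop k)) ⊆ B'.getD k ∅) ∧
          B'.map Finset.card = t} with hF
      have hmemA : ∀ b, b ∈ A ↔ b ⊆ S ∧ b.card = x ∧ L ⊆ b :=
        fun b => mem_A_iff hLS hLx
      have hkey : {B : List (Finset ℕ) | (∀ b ∈ B, b ≠ ∅) ∧ B.Pairwise Disjoint ∧
          blockUnion B = S ∧
          (∀ k < B.length, leastElems (ρ k) (blockUnion (B.drop k)) ⊆ B.getD k ∅) ∧
          B.map Finset.card = x :: t} =
          {B : List (Finset ℕ) | ∃ b ∈ A, ∃ B' ∈ F b, B = b :: B'} := by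
        ext B
        simp only [Set.mem_setOf_eq]
        constructor
        · rintro ⟨h1, h2, h3, h4, h5⟩
          cases B with
          | nil => simp at h5
          | cons b B' =>
            rw [List.map_cons, List.cons.injEq] at h5
            obtain ⟨hbx, hB't⟩ := h5
            rw [List.pairwise_cons] at h2
            obtain ⟨hdisj, hpair⟩ := h2
            have h3' : b ∪ blockUnion B' = S := by rw [← blockUnion_cons, h3]
            have hbdisj : Disjoint b (blockUnion B') := disjoint_blockUnion hdisj
            have hU' : blockUnion B' = S \ b := by
              rw [← h3', Finset.union_sdiff_cancel_left hbdisj]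
            have hbS : b ⊆ S := h3' ▸ Finset.subset_union_left
            have hLb : L ⊆ b := by
              have := h4 0 (by simp)
              simpa [h3] using this
            refine ⟨b, (hmemA b).mpr ⟨hbS, hbx, hLb⟩, B',
              ⟨fun c hc => h1 c (by simp [hc]), hpair, hU', ?_, hB't⟩, rfl⟩
            intro k hk
            have := h4 (k+1) (by simpa using Nat.succ_lt_succ hk)
            simpa using this
        · rintro ⟨b, hbA, B', ⟨g1, g2, g3, g4, g5⟩, rfl⟩
          obtain ⟨hbS, hbx, hLb⟩ := (hmemA b).mp hbA
          have hbne : b ≠ ∅ := by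
            have : 0 < b.card := hbx ▸ hxpos
            exact (Finset.card_pos.mp this).ne_empty
          have hdisj : ∀ c ∈ B', Disjoint b c := by
            intro c hc
            have hcsub : c ⊆ S \ b := g3 ▸ subset_blockUnion hc
            exact (Finset.disjoint_sdiff).mono_right hcsub
          have hU : blockUnion (b :: B') = S := by
            rw [blockUnion_cons, g3, Finset.union_sdiff_of_subset hbS]
          refine ⟨?_, List.pairwise_cons.mpr ⟨hdisj, g2⟩, hU, ?_, by simp [hbx, g5]⟩
          · rintro c hc
            rcases List.mem_cons.1 hc with rfl | hc
            · exact hbne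
            · exact g1 c hc
          · intro k hk
            cases k with
            | zero => simpa [hU] using hLb
            | succ k =>
              have := g4 k (by simpa using hk)
              simpa using this
      rw [hkey]
      set P : ℕ := ∏ j ∈ Finset.range (t.length - 1),
        Nat.choose ((t.drop j).sum - ρ (j+1)) (t.getD j 0 - ρ (j+1)) with hP
      have hfib : ∀ b ∈ A, (F b).ncard = P := by
        intro b hbA
        obtain ⟨hbS, hbx, hLb⟩ := (hmemA b).mp hbA
        have hcard' : t.sum = (S \ b).card := by
          rw [Finset.card_sdiff_of_subset hbS]; omega
        exact ih (fun k => ρ (k+1)) (S \ b) ht hcard'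
          (fun y hy => hpos y (by simp [hy]))
          (fun j hj => by
            have := hcon (j+1) (by simpa using Nat.succ_lt_succ hj)
            simpa using this)
      have hfin : ∀ b ∈ A, (F b).Finite := fun b _ => count_finite _ _ _
      rw [(ncard_cons_fibered A F hfin P hfib).2]
      have hAcard : A.card = (S.card - ρ 0).choose (x - ρ 0) := by
        rw [hA, card_A, Finset.card_sdiff_of_subset hLS, hLcard]
      rw [hAcard]
      -- now massage RHS
      obtain ⟨m, hm⟩ := (⟨t.length - 1, by omega⟩ : ∃ m, t.length = m + 1)
      have hlen : (x :: t).length - 1 = m + 1 := by simp [hm]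
      rw [hlen, Finset.prod_range_succ']
      have hPm : P = ∏ j ∈ Finset.range m,
          (((x :: t).drop (j+1)).sum - ρ (j+1)).choose
            ((x :: t).getD (j+1) 0 - ρ (j+1)) := by
        rw [hP]
        refine Finset.prod_congr (by rw [hm]; simp) (fun j _ => ?_)
        simp
      rw [← hPm, mul_comm]
      congr 1
      simp [hScard]

/-- The number of constrained partitions of `[n]` with shape `λ = (λ_1,…,λ_ℓ)`
equals `∏_{j=1}^{ℓ-1} C(Λ_j - ρ_j, λ_j - ρ_j)` where `Λ_j = λ_j + … + λ_ℓ`. -/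
theorem constrained_partition_count (ρ : ℕ → ℕ) (hρ : ∀ k, 1 ≤ ρ k) (n : ℕ)
    (lam : List ℕ) (hne : lam ≠ []) (hsum : lam.sum = n)
    (hpos : ∀ x ∈ lam, 0 < x)
    (hcon : ∀ j, j + 1 < lam.length → ρ j ≤ lam.getD j 0) :
    Set.ncard {B : List (Finset ℕ) |
        IsConstrainedPartition ρ n B ∧ B.map Finset.card = lam} =
      ∏ j ∈ Finset.range (lam.length - 1),
        Nat.choose ((lam.drop j).sum - ρ j) (lam.getD j 0 - ρ j) := by
  have hcard : lam.sum = (Finset.Icc 1 n).card := by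
    rw [hsum, Nat.card_Icc]; omega
  have hset : {B : List (Finset ℕ) |
      IsConstrainedPartition ρ n B ∧ B.map Finset.card = lam} =
      {B : List (Finset ℕ) | (∀ b ∈ B, b ≠ ∅) ∧ B.Pairwise Disjoint ∧
        blockUnion B = Finset.Icc 1 n ∧
        (∀ k < B.length, leastElems (ρ k) (blockUnion (B.drop k)) ⊆ B.getD k ∅) ∧
        B.map Finset.card = lam} := by
    ext B
    simp [IsConstrainedPartition, and_assoc]
  rw [hset]
  exact count_general lam ρ _ hne hcard hpos hcon
end

section
/- An ordered partition (B_1,...,B_ℓ) of [n] into nonempty blocks satisfies the constraint that each B_k contains the ρ_k least elements of B_k ∪ B_{k+1} ∪ ... ∪ B_ℓ (for every k with |B_k| ≥ ρ_k, and B_k ⊇ the least elements available when |B_k| < ρ_k only allowed for k = ℓ) if and only if the sequence consisting of the ρ_1 least elements of B_1, followed by the ρ_2 least elements of B_2, and so on (for the last block, its min(|B_ℓ|, ρ_ℓ) least elements), is an increasing sequence of integers. -/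
/-- The formation sequence: the `ρ k` least elements of block `k` (for the last
block, its `min(|B_ℓ|, ρ_ℓ)` least elements), concatenated over `k`. -/
def formationList (ρ : ℕ → ℕ) (B : List (Finset ℕ)) : List ℕ :=
  (((List.range B.length).map fun k => ((B.getD k ∅).sort (· ≤ ·)).take (ρ k))).flatten

namespace FormationAux
open List Finset


lemma blockUnion_cons (b : Finset ℕ) (rest : List (Finset ℕ)) :
    blockUnion (b :: rest) = b ∪ blockUnion rest := rfl

lemma disjoint_blockUnion {b : Finset ℕ} {rest : List (Finset ℕ)}
    (h : ∀ c ∈ rest, Disjoint b c) : Disjoint b (blockUnion rest) := by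
  induction rest with
  | nil => simp [blockUnion]
  | cons c rest ih =>
    rw [blockUnion_cons, Finset.disjoint_union_right]
    exact ⟨h c (by simp), ih fun d hd => h d (by simp [hd])⟩

lemma take_sort_subset {s : Finset ℕ} {m : ℕ} {x : ℕ}
    (hx : x ∈ (s.sort (· ≤ ·)).take m) : x ∈ s := by
  have := List.take_subset m _ hx
  simpa [Finset.mem_sort] using this

lemma cross {s : Finset ℕ} {m x y : ℕ} (hx : x ∈ (s.sort (· ≤ ·)).take m)
    (hy : y ∈ s) (hy' : y ∉ (s.sort (· ≤ ·)).take m) : x < y := by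
  have hs := (Finset.sortedLT_sort s).pairwise
  rw [← List.take_append_drop m (s.sort (· ≤ ·))] at hs
  have hcross := (List.pairwise_append.mp hs).2.2
  have hymem : y ∈ (s.sort (· ≤ ·)).drop m := by
    have : y ∈ (s.sort (· ≤ ·)).take m ++ (s.sort (· ≤ ·)).drop m := by
      rw [List.take_append_drop]; simpa [Finset.mem_sort] using hy
    rcases List.mem_append.mp this with h | h
    · exact absurd h hy'
    · exact h
  exact hcross x hx y hymem

lemma min'_mem_take {s : Finset ℕ} (hs : s.Nonempty) {m : ℕ} (hm : 1 ≤ m) :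
    s.min' hs ∈ (s.sort (· ≤ ·)).take m := by
  by_contra h
  have hlen : 0 < ((s.sort (· ≤ ·)).take m).length := by
    simp only [List.length_take, Finset.length_sort]
    exact lt_min hm (Finset.card_pos.mpr hs)
  obtain ⟨x, hx⟩ := List.exists_mem_of_length_pos hlen
  exact absurd (Finset.min'_le s x (take_sort_subset hx))
    (not_le.mpr (cross hx (s.min'_mem hs) h))

lemma sort_split {L s : Finset ℕ} (hsub : L ⊆ s)
    (hlt : ∀ l ∈ L, ∀ w ∈ s, w ∉ L → l < w) :
    s.sort (· ≤ ·) = L.sort (· ≤ ·) ++ (s \ L).sort (· ≤ ·) := by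
  haveI : Std.Antisymm (α := ℕ) (· < ·) := ⟨fun _ _ h1 h2 => ((not_lt_of_gt h2) h1).elim⟩
  refine (fun hp hs => List.Perm.eq_of_pairwise' (Finset.sortedLT_sort s).pairwise hs hp) ?_ ?_
  · rw [← Multiset.coe_eq_coe, Finset.sort_eq, ← Multiset.coe_add, Finset.sort_eq,
      Finset.sort_eq, Finset.sdiff_val, add_comm,
      tsub_add_cancel_of_le (Finset.val_le_iff.mpr hsub)]
  · rw [List.pairwise_append]
    refine ⟨(Finset.sortedLT_sort L).pairwise, (Finset.sortedLT_sort (s \ L)).pairwise, ?_⟩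
    intro a ha b hb
    rw [Finset.mem_sort] at ha hb
    rw [Finset.mem_sdiff] at hb
    exact hlt a ha b hb.1 hb.2

lemma least_subset_iff {b U : Finset ℕ} {m : ℕ} (hd : Disjoint b U) (hm : m ≤ b.card) :
    leastElems m (b ∪ U) ⊆ b ↔ ∀ x ∈ (b.sort (· ≤ ·)).take m, ∀ u ∈ U, x < u := by
  have hbS : b ⊆ b ∪ U := Finset.subset_union_left
  constructor
  · intro h x hx u hu
    set S := b ∪ U with hS
    set L := leastElems m S with hL
    have hLS : ∀ l ∈ L, l ∈ (S.sort (· ≤ ·)).take m := by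
      intro l hl; rw [hL, leastElems, List.mem_toFinset] at hl; exact hl
    have hcrossS : ∀ l ∈ L, ∀ w ∈ S, w ∉ L → l < w := by
      intro l hl w hw hw'
      refine cross (hLS l hl) hw ?_
      intro hmem; exact hw' (by rw [hL, leastElems, List.mem_toFinset]; exact hmem)
    -- split sort b
    have hsplit : b.sort (· ≤ ·) = L.sort (· ≤ ·) ++ (b \ L).sort (· ≤ ·) :=
      sort_split h (fun l hl w hw hw' => hcrossS l hl w (hbS hw) hw')
    have hcardL : L.card = m := by
      rw [hL, leastElems, List.toFinset_card_of_nodup (List.Nodup.sublist (List.take_sublist _ _) (Finset.sort_nodup _ _))]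
      rw [List.length_take, Finset.length_sort]
      exact min_eq_left (le_trans hm (Finset.card_le_card hbS))
    have htake : (b.sort (· ≤ ·)).take m = L.sort (· ≤ ·) := by
      rw [hsplit]; exact List.take_left' (by rw [Finset.length_sort, hcardL])
    rw [htake] at hx
    rw [Finset.mem_sort] at hx
    refine hcrossS x hx u (Finset.mem_union_right _ hu) ?_
    intro huL
    exact (Finset.disjoint_left.mp hd) (h huL) hu
  · intro h
    set T := ((b.sort (· ≤ ·)).take m).toFinset with hT
    have hTmem : ∀ x, x ∈ T ↔ x ∈ (b.sort (· ≤ ·)).take m := by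
      intro x; rw [hT, List.mem_toFinset]
    have hTb : T ⊆ b := fun x hx => take_sort_subset ((hTmem x).mp hx)
    have hsplit : (b ∪ U).sort (· ≤ ·) = T.sort (· ≤ ·) ++ ((b ∪ U) \ T).sort (· ≤ ·) := by
      refine sort_split (hTb.trans hbS) ?_
      intro l hl w hw hw'
      rcases Finset.mem_union.mp hw with hwb | hwu
      · exact cross ((hTmem l).mp hl) hwb (fun hmem => hw' ((hTmem w).mpr hmem))
      · exact h l ((hTmem l).mp hl) w hwu
    have hcardT : T.card = m := by
      rw [hT, List.toFinset_card_of_nodup (List.Nodup.sublist (List.take_sublist _ _) (Finset.sort_nodup _ _))]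
      rw [List.length_take, Finset.length_sort]
      exact min_eq_left hm
    intro x hx
    rw [leastElems, List.mem_toFinset, hsplit,
      List.take_left' (by rw [Finset.length_sort, hcardT]), Finset.mem_sort] at hx
    exact hTb hx


lemma mem_blockUnion {x : ℕ} {B : List (Finset ℕ)} :
    x ∈ blockUnion B ↔ ∃ b ∈ B, x ∈ b := by
  induction B with
  | nil => simp [blockUnion]
  | cons c rest ih => simp [blockUnion_cons, ih]

lemma formation_cons (ρ : ℕ → ℕ) (b : Finset ℕ) (rest : List (Finset ℕ)) :
    formationList ρ (b :: rest) =
      ((b.sort (· ≤ ·)).take (ρ 0)) ++ formationList (fun k => ρ (k + 1)) rest := by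
  simp [formationList, List.range_succ_eq_map, List.map_map, Function.comp_def]

lemma mem_formation {x : ℕ} {ρ : ℕ → ℕ} {B : List (Finset ℕ)}
    (hx : x ∈ formationList ρ B) : x ∈ blockUnion B := by
  induction B generalizing ρ with
  | nil => simp [formationList] at hx
  | cons c rest ih =>
    rw [formation_cons, List.mem_append] at hx
    rw [blockUnion_cons, Finset.mem_union]
    rcases hx with h | h
    · left
      have := List.take_subset _ _ h
      simpa [Finset.mem_sort] using this
    · right; exact ih h

lemma aux (B : List (Finset ℕ)) : ∀ (ρ : ℕ → ℕ), (∀ k, 1 ≤ ρ k) →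
    (∀ b ∈ B, b ≠ ∅) → B.Pairwise _root_.Disjoint →
    (∀ k, k + 1 < B.length → ρ k ≤ (B.getD k ∅).card) →
    ((∀ k < B.length, leastElems (ρ k) (blockUnion (B.drop k)) ⊆ B.getD k ∅) ↔
      (formationList ρ B).Pairwise (· < ·)) := by
  induction B with
  | nil => intro ρ _ _ _ _; simp [formationList]
  | cons b rest ih =>
    intro ρ hρ hne hdisj hcard
    rw [List.pairwise_cons] at hdisj
    have hd : Disjoint b (blockUnion rest) := disjoint_blockUnion hdisj.1
    have ihr := ih (fun k => ρ (k + 1)) (fun k => hρ (k + 1))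
      (fun c hc => hne c (List.mem_cons_of_mem _ hc)) hdisj.2
      (fun k hk => hcard (k + 1) (by simpa using Nat.succ_lt_succ hk))
    have hsplitL : (∀ k < (b :: rest).length,
        leastElems (ρ k) (blockUnion ((b :: rest).drop k)) ⊆ (b :: rest).getD k ∅) ↔
        (leastElems (ρ 0) (b ∪ blockUnion rest) ⊆ b ∧
          ∀ k < rest.length, leastElems (ρ (k + 1)) (blockUnion (rest.drop k)) ⊆ rest.getD k ∅) := by
      constructor
      · intro h
        refine ⟨by simpa [blockUnion_cons] using h 0 (by simp), fun k hk => ?_⟩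
        simpa using h (k + 1) (by simpa using Nat.succ_lt_succ hk)
      · rintro ⟨h0, h1⟩ k hk
        match k with
        | 0 => simpa [blockUnion_cons] using h0
        | k + 1 => simpa using h1 k (by simpa using hk)
    have htakes : (((b.sort (· ≤ ·)).take (ρ 0)).Pairwise (· < ·)) :=
      List.Pairwise.sublist (List.take_sublist _ _) (Finset.sortedLT_sort b).pairwise
    rw [hsplitL, formation_cons, List.pairwise_append]
    match rest with
    | [] =>
      have h0 : leastElems (ρ 0) (b ∪ blockUnion []) ⊆ b := by
        intro x hx
        rw [leastElems, List.mem_toFinset] at hx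
        have := take_sort_subset hx
        simpa [blockUnion] using this
      simp [formationList, h0]
      exact htakes
    | c :: rest' =>
      have hρ0 : ρ 0 ≤ b.card := by
        have := hcard 0 (by simp)
        simpa using this
      rw [least_subset_iff hd hρ0]
      have hcne : c.Nonempty := Finset.nonempty_of_ne_empty (hne c (by simp))
      have hUne : (blockUnion (c :: rest')).Nonempty := by
        obtain ⟨y, hy⟩ := hcne
        exact ⟨y, mem_blockUnion.mpr ⟨c, by simp, hy⟩⟩
      constructor
      · rintro ⟨hX, hA⟩
        exact ⟨htakes, (ihr.mp hA : _), fun x hx y hy => hX x hx y (mem_formation hy)⟩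
      · rintro ⟨-, hCrest, hC0⟩
        have hArest := ihr.mpr hCrest
        refine ⟨?_, hArest⟩
        intro x hx u hu
        have hμ : (blockUnion (c :: rest')).min' hUne ∈
            leastElems (ρ 1) (blockUnion (c :: rest')) := by
          rw [leastElems, List.mem_toFinset]
          exact min'_mem_take hUne (hρ 1)
        have hμc : (blockUnion (c :: rest')).min' hUne ∈ c := by
          have := hArest 0 (by simp)
          simpa using this hμ
        have hminc : c.min' hcne ∈ formationList (fun k => ρ (k + 1)) (c :: rest') := by
          rw [formation_cons]
          exact List.mem_append_left _ (min'_mem_take hcne (hρ 1))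
        calc x < c.min' hcne := hC0 x hx _ hminc
          _ ≤ (blockUnion (c :: rest')).min' hUne := Finset.min'_le c _ hμc
          _ ≤ u := Finset.min'_le _ u hu

end FormationAux

/-- For an ordered partition `(B_1,…,B_ℓ)` of `[n]` into nonempty blocks (with
`|B_k| ≥ ρ_k` allowed to fail only for `k = ℓ`), the constraint that each `B_k`
contains the `ρ_k` least elements of `B_k ∪ ⋯ ∪ B_ℓ` holds iff the
concatenation of the `ρ_k` least elements of the blocks is increasing. -/
theorem constrained_iff_formation_increasing (ρ : ℕ → ℕ) (hρ : ∀ k, 1 ≤ ρ k)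
    (n : ℕ) (B : List (Finset ℕ)) (hne : ∀ b ∈ B, b ≠ ∅)
    (hdisj : B.Pairwise Disjoint) (hunion : blockUnion B = Finset.Icc 1 n) :
    ((∀ k, k + 1 < B.length → ρ k ≤ (B.getD k ∅).card) ∧
        ∀ k < B.length, leastElems (ρ k) (blockUnion (B.drop k)) ⊆ B.getD k ∅) ↔
      ((∀ k, k + 1 < B.length → ρ k ≤ (B.getD k ∅).card) ∧
        (formationList ρ B).Pairwise (· < ·)) :=
  and_congr_right fun hcard => FormationAux.aux B ρ hρ hne hdisj hcard
end

section
/- For the constrained sampling Markov transition on constrained compositions: given a constrained composition λ = (λ_1,...,λ_ℓ) of n with n > 1, the transition probabilities P(λ → μ) over all compositions μ obtained by decreasing one part of λ by 1 (deleting a part if it becomes 0, where for j < ℓ the probability is [∏_{i=2}^{j} Λ_i/(Λ_{i-1} - ρ_{i-1})] · (λ_j - ρ_j)/(Λ_j - ρ_j), and for j = ℓ it is ∏_{i=2}^{ℓ} Λ_i/(Λ_{i-1} - ρ_{i-1}), with Λ_j = λ_j + ... + λ_ℓ) sum to 1. -/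
/-- The constrained-sampling transition probabilities out of a constrained
composition `λ = (λ_1,…,λ_ℓ)` sum to one: decreasing part `j < ℓ` has probability
`[∏_{i=2}^{j} Λ_i/(Λ_{i-1}-ρ_{i-1})]·(λ_j-ρ_j)/(Λ_j-ρ_j)`, and decreasing the last
part has probability `∏_{i=2}^{ℓ} Λ_i/(Λ_{i-1}-ρ_{i-1})`, with `Λ_j = λ_j+…+λ_ℓ`. -/
theorem constrained_sampling_probabilities_sum_to_one (ρ : ℕ → ℕ)
    (hρ : ∀ k, 1 ≤ ρ k) (lam : List ℕ) (hne : lam ≠ [])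
    (hpos : ∀ x ∈ lam, 0 < x) (hn : 1 < lam.sum)
    (hcon : ∀ j, j + 1 < lam.length → ρ j ≤ lam.getD j 0)
    (hden : ∀ j, j + 1 < lam.length → ρ j < (lam.drop j).sum) :
    (∑ j ∈ Finset.range (lam.length - 1),
        (∏ i ∈ Finset.range j,
            ((lam.drop (i + 1)).sum : ℝ) / (((lam.drop i).sum : ℝ) - (ρ i : ℝ))) *
          (((lam.getD j 0 : ℝ) - (ρ j : ℝ)) /
            (((lam.drop j).sum : ℝ) - (ρ j : ℝ)))) +
      (∏ i ∈ Finset.range (lam.length - 1),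
        ((lam.drop (i + 1)).sum : ℝ) / (((lam.drop i).sum : ℝ) - (ρ i : ℝ))) = 1 := by
  set Λ : ℕ → ℝ := fun j => ((lam.drop j).sum : ℝ) with hΛ
  set f : ℕ → ℝ := fun j =>
    ∏ i ∈ Finset.range j, Λ (i + 1) / (Λ i - (ρ i : ℝ)) with hf
  have hterm : ∀ j ∈ Finset.range (lam.length - 1),
      f j * (((lam.getD j 0 : ℝ) - (ρ j : ℝ)) / (Λ j - (ρ j : ℝ)))
        = f j - f (j + 1) := by
    intro j hj
    rw [Finset.mem_range] at hj
    have hjl : j + 1 < lam.length := by omega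
    have hjlt : j < lam.length := by omega
    have hd : ρ j < (lam.drop j).sum := hden j hjl
    have hne' : Λ j - (ρ j : ℝ) ≠ 0 := by
      have : (ρ j : ℝ) < Λ j := by simp only [hΛ]; exact_mod_cast hd
      linarith
    have hg : lam.getD j 0 = lam[j] := List.getD_eq_getElem lam 0 hjlt
    have hs : (lam.drop j).sum = lam[j] + (lam.drop (j + 1)).sum := by
      conv_lhs => rw [List.drop_eq_getElem_cons hjlt]
      rw [List.sum_cons]
    have hsplit : Λ j = (lam.getD j 0 : ℝ) + Λ (j + 1) := by
      simp only [hΛ, hs, hg]; push_cast; ring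
    have hfs : f (j + 1) = f j * (Λ (j + 1) / (Λ j - (ρ j : ℝ))) := by
      simp only [hf]; rw [Finset.prod_range_succ]
    have key : ((lam.getD j 0 : ℝ) - (ρ j : ℝ)) / (Λ j - (ρ j : ℝ))
        = 1 - Λ (j + 1) / (Λ j - (ρ j : ℝ)) := by
      rw [eq_sub_iff_add_eq, ← add_div, div_eq_one_iff_eq hne', hsplit]
      ring
    rw [key, mul_sub, mul_one, hfs]
  have hlast : (∏ i ∈ Finset.range (lam.length - 1),
      Λ (i + 1) / (Λ i - (ρ i : ℝ))) = f (lam.length - 1) := rfl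
  rw [Finset.sum_congr rfl hterm, Finset.sum_range_sub', hlast]
  have hf0 : f 0 = 1 := by simp [hf]
  rw [hf0]; ring
end

section
/- Let ρ = (ρ_1, ρ_2, ...) with ρ_k > 1 for some k, and let Π be an exchangeable random partition of ℕ that is almost surely a constrained partition with respect to ρ. Then almost surely Π has at most k nonempty blocks. -/
open MeasureTheory

/-- A restricted growth string: the canonical encoding of a partition of `ℕ`
(`f i` = index of the block containing `i`, blocks ordered by least elements). -/
def IsRGS (f : ℕ → ℕ) : Prop :=
  f 0 = 0 ∧ ∀ i, f (i + 1) ≤ (Finset.range (i + 1)).sup f + 1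

/-- The partition encoded by `f` is constrained with respect to `ρ`: for every
nonempty block `k`, the block contains the `ρ k` least elements of the union of
blocks `k, k+1, …` (i.e. of `{y | k ≤ f y}`). -/
def IsConstrainedRGS (ρ : ℕ → ℕ) (f : ℕ → ℕ) : Prop :=
  IsRGS f ∧ ∀ k, (∃ i, f i = k) → ∀ x, k ≤ f x →
    {y : ℕ | k ≤ f y ∧ y < x}.ncard < ρ k → f x = k

/-- Canonical restricted growth string of an arbitrary labelling `g` of a
partition: relabel the blocks in order of first appearance. -/
def rgsOf (g : ℕ → ℕ) (i : ℕ) : ℕ :=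
  ((Finset.range (Nat.find (show ∃ j, g j = g i from ⟨i, rfl⟩))).image g).card

/-- An RGS attains every value up to its running sup. -/
lemma rgs_exists_of_le_sup {g : ℕ → ℕ} (hg : IsRGS g) :
    ∀ n v, v ≤ (Finset.range (n + 1)).sup g → ∃ j ≤ n, g j = v := by
  intro n
  induction n with
  | zero =>
      intro v hv
      have h0 : (Finset.range 1).sup g = 0 := by
        rw [Finset.range_one, Finset.sup_singleton, hg.1]
      rw [h0, Nat.le_zero] at hv
      exact ⟨0, le_refl 0, by rw [hv, hg.1]⟩
  | succ n ih =>
      intro v hv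
      rw [Finset.range_add_one, Finset.sup_insert] at hv
      rcases le_or_gt v ((Finset.range (n + 1)).sup g) with h | h
      · obtain ⟨j, hj, hjv⟩ := ih v h
        exact ⟨j, by omega, hjv⟩
      · have h1 : g (n + 1) ≤ (Finset.range (n + 1)).sup g + 1 := hg.2 n
        have h2 : v ≤ g (n + 1) ⊔ (Finset.range (n + 1)).sup g := hv
        have h3 : v ≤ max (g (n + 1)) ((Finset.range (n + 1)).sup g) := h2
        have : g (n + 1) = v := by omega
        exact ⟨n + 1, le_refl _, this⟩

/-- The image of an RGS on an initial segment is an initial segment of values. -/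
lemma rgs_image {g : ℕ → ℕ} (hg : IsRGS g) (n : ℕ) :
    (Finset.range (n + 1)).image g = Finset.Iic ((Finset.range (n + 1)).sup g) := by
  ext a
  simp only [Finset.mem_image, Finset.mem_Iic, Finset.mem_range]
  constructor
  · rintro ⟨j, hj, rfl⟩
    exact Finset.le_sup (Finset.mem_range.mpr hj)
  · intro ha
    obtain ⟨j, hj, hjv⟩ := rgs_exists_of_le_sup hg n a ha
    exact ⟨j, by omega, hjv⟩

/-- An RGS is its own canonical relabelling. -/
lemma rgsOf_eq_self {g : ℕ → ℕ} (hg : IsRGS g) (i : ℕ) : rgsOf g i = g i := by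
  have hex : ∃ j, g j = g i := ⟨i, rfl⟩
  show ((Finset.range (Nat.find hex)).image g).card = g i
  have hspec : g (Nat.find hex) = g i := Nat.find_spec hex
  cases h : Nat.find hex with
  | zero =>
      rw [h] at hspec
      simp [← hspec, hg.1]
  | succ n =>
      rw [h] at hspec
      rw [rgs_image hg n, Nat.card_Iic]
      have hle : g (n + 1) ≤ (Finset.range (n + 1)).sup g + 1 := hg.2 n
      have hne : ∀ j ≤ n, g j ≠ g i := by
        intro j hj
        exact Nat.find_min hex (h ▸ Nat.lt_succ_of_le hj)
      have hgt : (Finset.range (n + 1)).sup g < g i := by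
        by_contra hcon
        push_neg at hcon
        obtain ⟨j, hj, hjv⟩ := rgs_exists_of_le_sup hg n (g i) hcon
        exact hne j hj hjv
      omega

/-- `rgsOf g i` only depends on `g` on `{0, …, i}`. -/
lemma rgsOf_congr {g g' : ℕ → ℕ} {i : ℕ} (h : ∀ j ≤ i, g j = g' j) :
    rgsOf g i = rgsOf g' i := by
  have hex : ∃ j, g j = g i := ⟨i, rfl⟩
  have hex' : ∃ j, g' j = g' i := ⟨i, rfl⟩
  show ((Finset.range (Nat.find hex)).image g).card
      = ((Finset.range (Nat.find hex')).image g').card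
  have hle : Nat.find hex ≤ i := Nat.find_le rfl
  have hle' : Nat.find hex' ≤ i := Nat.find_le rfl
  have heq : Nat.find hex = Nat.find hex' := by
    apply le_antisymm
    · apply Nat.find_le
      rw [h _ hle', Nat.find_spec hex']
      exact (h i (le_refl i)).symm
    · apply Nat.find_le
      rw [← h _ hle, Nat.find_spec hex]
      exact h i (le_refl i)
  rw [← heq]
  congr 1
  apply Finset.image_congr
  intro j hj
  simp only [Finset.coe_range, Set.mem_Iio] at hj
  exact h j (by omega)

/-- A constrained partition cannot have the second element of the tail union
`{y | k ≤ g y}` in a block other than `k` when `ρ k ≥ 2`. -/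
lemma not_constrained_of_pattern {ρ : ℕ → ℕ} {k : ℕ} (hk : 1 < ρ k) {g : ℕ → ℕ}
    (hC : IsConstrainedRGS ρ g) {x₁ x₂ : ℕ} (h12 : x₁ < x₂) (h1 : g x₁ = k)
    (h2 : g x₂ = k + 1) (hbelow : ∀ y, y < x₂ → y ≠ x₁ → g y < k) : False := by
  have hset : {y : ℕ | k ≤ g y ∧ y < x₂} = {x₁} := by
    ext y
    simp only [Set.mem_setOf_eq, Set.mem_singleton_iff]
    constructor
    · rintro ⟨hky, hyx⟩
      by_contra hne
      exact absurd (hbelow y hyx hne) (by omega)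
    · rintro rfl
      exact ⟨le_of_eq h1.symm, h12⟩
  have := hC.2 k ⟨x₁, h1⟩ x₂ (by omega) (by rw [hset, Set.ncard_singleton]; omega)
  omega

/-- If a constrained partition (with `ρ k ≥ 2`) has `k+1` first appearing at `x0`,
then below `x0` all labels are `≤ k` and the tail union has at least two
elements, the two least carrying label `k`. -/
lemma shape_of_constrained {ρ : ℕ → ℕ} {k : ℕ} (hk : 1 < ρ k) {g : ℕ → ℕ}
    (hC : IsConstrainedRGS ρ g) {x0 : ℕ} (h0 : g x0 = k + 1)
    (hmin : ∀ j, j < x0 → g j ≠ k + 1) :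
    ∃ x₁ x₂, x₁ < x₂ ∧ x₂ < x0 ∧ g x₁ = k ∧ g x₂ = k ∧
      (∀ y, y < x₂ → y ≠ x₁ → g y < k) ∧ (∀ y, y < x0 → g y ≤ k) := by
  have hg := hC.1
  have hlek : ∀ y, y < x0 → g y ≤ k := by
    intro y hy
    by_contra hcon
    push_neg at hcon
    have : k + 1 ≤ (Finset.range (y + 1)).sup g :=
      le_trans hcon (Finset.le_sup (Finset.mem_range.mpr (show y < y + 1 by omega)))
    obtain ⟨j, hj, hjv⟩ := rgs_exists_of_le_sup hg y (k + 1) this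
    exact hmin j (by omega) hjv
  -- block k is nonempty
  have hkex : ∃ j, g j = k := by
    have : k ≤ (Finset.range (x0 + 1)).sup g := by
      have := Finset.le_sup (f := g) (Finset.mem_range.mpr (show x0 < x0 + 1 by omega))
      omega
    obtain ⟨j, _, hjv⟩ := rgs_exists_of_le_sup hg x0 k this
    exact ⟨j, hjv⟩
  -- the set S of tail elements below x0
  set S : Set ℕ := {y : ℕ | k ≤ g y ∧ y < x0} with hS
  have hSfin : S.Finite := Set.Finite.subset (Set.finite_Iio x0) (fun y hy => hy.2)
  have hScard : ρ k ≤ S.ncard := by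
    by_contra hcon
    push_neg at hcon
    have := hC.2 k hkex x0 (by omega) hcon
    omega
  have hSk : ∀ y ∈ S, g y = k := by
    rintro y ⟨h1, h2⟩
    have := hlek y h2
    omega
  have hSne : S.Nonempty := by
    rcases Set.eq_empty_or_nonempty S with h | h
    · rw [h, Set.ncard_empty] at hScard; omega
    · exact h
  set x₁ := sInf S with hx₁
  have hx₁S : x₁ ∈ S := Nat.sInf_mem hSne
  have hS'ne : (S \ {x₁}).Nonempty := by
    by_contra hcon
    rw [Set.not_nonempty_iff_eq_empty, Set.diff_eq_empty] at hcon
    have : S.ncard ≤ 1 := le_trans (Set.ncard_le_ncard hcon (Set.finite_singleton x₁))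
      (le_of_eq (Set.ncard_singleton x₁))
    omega
  set x₂ := sInf (S \ {x₁}) with hx₂
  have hx₂S : x₂ ∈ S \ {x₁} := Nat.sInf_mem hS'ne
  have h12 : x₁ < x₂ := by
    have hle : x₁ ≤ x₂ := Nat.sInf_le hx₂S.1
    have : x₂ ≠ x₁ := hx₂S.2
    omega
  refine ⟨x₁, x₂, h12, hx₂S.1.2, hSk _ hx₁S, hSk _ hx₂S.1, ?_, hlek⟩
  intro y hy hne
  by_contra hcon
  push_neg at hcon
  have hyS : y ∈ S := ⟨hcon, by have := hx₂S.1.2; omega⟩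
  have : x₂ ≤ y := Nat.sInf_le ⟨hyS, hne⟩
  omega

/-- Swapping the second tail element with the first element of block `k+1`
yields again a canonical RGS. -/
lemma isRGS_swap {g : ℕ → ℕ} (hg : IsRGS g) {k x₁ x₂ x0 : ℕ}
    (h12 : x₁ < x₂) (h20 : x₂ < x0) (h1 : g x₁ = k) (h2 : g x₂ = k)
    (h0 : g x0 = k + 1) (hle : ∀ y, y < x0 → g y ≤ k) :
    IsRGS (fun i => g (Equiv.swap x₂ x0 i)) := by
  set h : ℕ → ℕ := fun i => g (Equiv.swap x₂ x0 i) with hh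
  have hval : ∀ i, h i = if i = x₂ then k + 1 else if i = x0 then k else g i := by
    intro i
    simp only [hh, Equiv.swap_apply_def]
    split_ifs with e1 e2
    · exact h0
    · exact h2
    · rfl
  constructor
  · rw [hval 0]
    have : (0:ℕ) ≠ x₂ := by omega
    rw [if_neg this, if_neg (by omega)]
    exact hg.1
  · intro i
    have hx₁mem : ∀ m, x₁ < m → h x₁ = k ∧ x₁ ∈ Finset.range m := by
      intro m hm
      refine ⟨?_, Finset.mem_range.mpr hm⟩
      rw [hval x₁, if_neg (by omega), if_neg (by omega)]
      exact h1
    rcases lt_trichotomy (i+1) x₂ with hc | hc | hc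
    · -- below x₂ : h agrees with g
      have hcongr : ∀ j ∈ Finset.range (i + 1), h j = g j := by
        intro j hj
        rw [Finset.mem_range] at hj
        rw [hval j, if_neg (by omega), if_neg (by omega)]
      rw [hval (i+1), if_neg (by omega), if_neg (by omega),
        Finset.sup_congr rfl hcongr]
      exact hg.2 i
    · -- i+1 = x₂
      rw [hval (i+1), if_pos hc]
      obtain ⟨hv, hmem⟩ := hx₁mem (i+1) (by omega)
      have := Finset.le_sup (f := h) hmem
      omega
    · rcases lt_trichotomy (i+1) x0 with hc' | hc' | hc'
      · -- x₂ < i+1 < x0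
        rw [hval (i+1), if_neg (by omega), if_neg (by omega)]
        have := hle (i+1) hc'
        have hx₂mem : x₂ ∈ Finset.range (i+1) := Finset.mem_range.mpr (by omega)
        have hsup : k + 1 ≤ (Finset.range (i+1)).sup h := by
          have := Finset.le_sup (f := h) hx₂mem
          rw [hval x₂, if_pos rfl] at this
          omega
        omega
      · -- i+1 = x0
        rw [hval (i+1), if_neg (by omega), if_pos hc']
        obtain ⟨hv, hmem⟩ := hx₁mem (i+1) (by omega)
        have := Finset.le_sup (f := h) hmem
        omega
      · -- beyond x0
        rw [hval (i+1), if_neg (by omega), if_neg (by omega)]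
        have hsup : (Finset.range (i+1)).sup g ≤ (Finset.range (i+1)).sup h := by
          apply Finset.sup_le
          intro j hj
          rw [Finset.mem_range] at hj
          rcases eq_or_ne j x₂ with rfl | hj2
          · have hmem : x0 ∈ Finset.range (i+1) := Finset.mem_range.mpr (by omega)
            have := Finset.le_sup (f := h) hmem
            rw [hval x0, if_neg (by omega), if_pos rfl] at this
            omega
          · rcases eq_or_ne j x0 with rfl | hj0
            · have hmem : x₂ ∈ Finset.range (i+1) := Finset.mem_range.mpr (by omega)
              have := Finset.le_sup (f := h) hmem
              rw [hval x₂, if_pos rfl] at this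
              omega
            · have hmem : j ∈ Finset.range (i+1) := Finset.mem_range.mpr hj
              have := Finset.le_sup (f := h) hmem
              rw [hval j, if_neg hj2, if_neg hj0] at this
              exact this
        have := hg.2 i
        omega

/-- Measurability of the canonical relabelling of a permuted random partition. -/
lemma measurable_rgsOf_comp {Ω : Type*} [MeasurableSpace Ω] {f : Ω → ℕ → ℕ}
    (hmeas : Measurable f) (σ : Equiv.Perm ℕ) :
    Measurable (fun ω => rgsOf fun i => f ω (σ.symm i)) := by
  rw [measurable_pi_iff]
  intro j
  have hcoord : ∀ t : ℕ, Measurable (fun ω => f ω t) := fun t =>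
    (measurable_pi_apply t).comp hmeas
  let restr : Ω → (Fin (j + 1) → ℕ) := fun ω m => f ω (σ.symm m)
  have hrestr : Measurable restr := measurable_pi_iff.mpr fun m => hcoord _
  let F : (Fin (j + 1) → ℕ) → ℕ := fun t =>
    rgsOf (fun i => if h : i < j + 1 then t ⟨i, h⟩ else 0) j
  have hF : Measurable F := measurable_of_countable F
  have heq : (fun ω => rgsOf (fun i => f ω (σ.symm i)) j) = F ∘ restr := by
    funext ω
    exact rgsOf_congr (fun i hi => by
      simp only [restr, dif_pos (Nat.lt_succ_of_le hi)])
  rw [heq]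
  exact hF.comp hrestr

/-- Key step: the event that the partition is constrained and a fixed cylinder
pattern with first occurrence of label `k+1` at `x0` holds, is null. -/
lemma key_zero {Ω : Type*} [MeasurableSpace Ω] (P : Measure Ω)
    {ρ : ℕ → ℕ} {k : ℕ} (hk : 1 < ρ k)
    {f : Ω → ℕ → ℕ} (hmeas : Measurable f)
    (hN : P {ω | ¬ IsConstrainedRGS ρ (f ω)} = 0)
    (hexch : ∀ σ : Equiv.Perm ℕ,
      P.map (fun ω => rgsOf fun i => f ω (σ.symm i)) = P.map f)
    (x0 : ℕ) (v : ℕ → ℕ) (hv0 : v x0 = k + 1) (hvlt : ∀ j, j < x0 → v j ≠ k + 1) :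
    P {ω | IsConstrainedRGS ρ (f ω) ∧ ∀ j ≤ x0, f ω j = v j} = 0 := by
  by_cases hs : ∃ x₁ x₂, x₁ < x₂ ∧ x₂ < x0 ∧ v x₁ = k ∧ v x₂ = k ∧
      (∀ y, y < x₂ → y ≠ x₁ → v y < k) ∧ (∀ y, y < x0 → v y ≤ k)
  · obtain ⟨x₁, x₂, h12, h20, h1, h2, hbelow, hlek⟩ := hs
    set σ : Equiv.Perm ℕ := Equiv.swap x₂ x0 with hσ
    set w : ℕ → ℕ := fun m => if m = x₂ then k + 1 else if m = x0 then k else v m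
      with hw
    have hwval : ∀ m, w m = if m = x₂ then k + 1 else if m = x0 then k else v m :=
      fun m => rfl
    set S : Set (ℕ → ℕ) := ⋂ (m : ℕ), {g' : ℕ → ℕ | m ≤ x0 → g' m = w m} with hSdef
    have hSmem : ∀ g' : ℕ → ℕ, g' ∈ S ↔ ∀ m ≤ x0, g' m = w m := by
      intro g'
      simp only [hSdef, Set.mem_iInter, Set.mem_setOf_eq]
    have hS : MeasurableSet S := by
      apply MeasurableSet.iInter
      intro m
      by_cases hm : m ≤ x0
      · have : {g' : ℕ → ℕ | m ≤ x0 → g' m = w m}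
            = (fun g' : ℕ → ℕ => g' m) ⁻¹' {w m} := by
          ext g'; simp [hm]
        rw [this]
        exact measurable_pi_apply m (measurableSet_singleton _)
      · have : {g' : ℕ → ℕ | m ≤ x0 → g' m = w m} = Set.univ := by
          ext g'; simp [hm]
        rw [this]; exact MeasurableSet.univ
    set u : Ω → ℕ → ℕ := fun ω => rgsOf fun i => f ω (σ.symm i) with hu
    have hsub : {ω | IsConstrainedRGS ρ (f ω) ∧ ∀ j ≤ x0, f ω j = v j} ⊆ u ⁻¹' S := by
      rintro ω ⟨hC, hv⟩
      have hg1 : f ω x₁ = k := by rw [hv x₁ (by omega)]; exact h1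
      have hg2 : f ω x₂ = k := by rw [hv x₂ (by omega)]; exact h2
      have hg0 : f ω x0 = k + 1 := by rw [hv x0 le_rfl]; exact hv0
      have hglek : ∀ y, y < x0 → f ω y ≤ k := fun y hy => by
        rw [hv y (by omega)]; exact hlek y hy
      have hsymm : σ.symm = Equiv.swap x₂ x0 := by rw [hσ, Equiv.symm_swap]
      have hR : IsRGS (fun i => f ω (σ.symm i)) := by
        rw [hsymm]
        exact isRGS_swap hC.1 h12 h20 hg1 hg2 hg0 hglek
      rw [Set.mem_preimage, hSmem]
      intro m hm
      have hself : u ω m = f ω (σ.symm m) := rgsOf_eq_self hR m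
      rw [hself, hsymm, Equiv.swap_apply_def, hwval m]
      by_cases e2 : m = x₂
      · rw [if_pos e2, if_pos e2, hg0]
      · rw [if_neg e2, if_neg e2]
        by_cases e0 : m = x0
        · rw [if_pos e0, if_pos e0, hg2]
        · rw [if_neg e0, if_neg e0]
          exact hv m hm
    have hchain : P {ω | IsConstrainedRGS ρ (f ω) ∧ ∀ j ≤ x0, f ω j = v j} ≤ 0 := by
      calc P {ω | IsConstrainedRGS ρ (f ω) ∧ ∀ j ≤ x0, f ω j = v j}
          ≤ P (u ⁻¹' S) := measure_mono hsub
        _ = P.map u S := (Measure.map_apply (measurable_rgsOf_comp hmeas σ) hS).symm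
        _ = P.map f S := by rw [hu, hexch σ]
        _ = P (f ⁻¹' S) := Measure.map_apply hmeas hS
        _ ≤ P {ω | ¬ IsConstrainedRGS ρ (f ω)} := by
            apply measure_mono
            intro ω hω
            rw [Set.mem_preimage, hSmem] at hω
            intro hC
            refine not_constrained_of_pattern hk hC h12 ?_ ?_ ?_
            · rw [hω x₁ (by omega), hwval x₁, if_neg (by omega), if_neg (by omega)]
              exact h1
            · rw [hω x₂ (by omega), hwval x₂, if_pos rfl]
            · intro y hy hne
              rw [hω y (by omega), hwval y, if_neg (by omega), if_neg (by omega)]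
              exact hbelow y hy hne
        _ = 0 := hN
    exact le_antisymm hchain zero_le
  · apply measure_mono_null _ (measure_empty (μ := P))
    rintro ω ⟨hC, hv⟩
    exfalso
    apply hs
    have hg0 : f ω x0 = k + 1 := by rw [hv x0 le_rfl]; exact hv0
    have hgmin : ∀ m, m < x0 → f ω m ≠ k + 1 := fun m hm => by
      rw [hv m (by omega)]; exact hvlt m hm
    obtain ⟨x₁, x₂, h12, h20, h1, h2, hbelow, hlek⟩ :=
      shape_of_constrained hk hC hg0 hgmin
    refine ⟨x₁, x₂, h12, h20, ?_, ?_, ?_, ?_⟩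
    · rw [← hv x₁ (by omega)]; exact h1
    · rw [← hv x₂ (by omega)]; exact h2
    · intro y hy hne
      rw [← hv y (by omega)]; exact hbelow y hy hne
    · intro y hy
      rw [← hv y (by omega)]; exact hlek y hy

/-- If an exchangeable random partition of `ℕ` is a.s. constrained with respect
to `ρ` and `ρ k > 1` for some (0-indexed) `k`, then a.s. it has at most `k + 1`
nonempty blocks (blocks `0,…,k`), i.e. at most `k` blocks beyond the first `1`:
the paper's "at most `k` nonempty blocks" in 1-indexed notation. -/
theorem exchangeable_constrained_finitely_many_blocks {Ω : Type*}
    [MeasurableSpace Ω] (P : Measure Ω) [IsProbabilityMeasure P]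
    (ρ : ℕ → ℕ) (hρ : ∀ j, 1 ≤ ρ j) (k : ℕ) (hk : 1 < ρ k)
    (f : Ω → ℕ → ℕ) (hmeas : Measurable f)
    (hconstr : ∀ᵐ ω ∂P, IsConstrainedRGS ρ (f ω))
    (hexch : ∀ σ : Equiv.Perm ℕ,
      P.map (fun ω => rgsOf fun i => f ω (σ.symm i)) = P.map f) :
    ∀ᵐ ω ∂P, ∀ i, f ω i ≤ k := by
  have hN : P {ω | ¬ IsConstrainedRGS ρ (f ω)} = 0 := ae_iff.mp hconstr
  rw [ae_iff]
  have hmain : ∀ x0 : ℕ,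
      P {ω | IsConstrainedRGS ρ (f ω) ∧ f ω x0 = k + 1 ∧
        ∀ j, j < x0 → f ω j ≠ k + 1} = 0 := by
    intro x0
    have hcover : {ω | IsConstrainedRGS ρ (f ω) ∧ f ω x0 = k + 1 ∧
          ∀ j, j < x0 → f ω j ≠ k + 1}
        ⊆ ⋃ (v : Fin (x0 + 1) → ℕ),
          {ω | IsConstrainedRGS ρ (f ω) ∧
            (∀ j ≤ x0, f ω j =
              (fun m : ℕ => if h : m ≤ x0 then v ⟨m, Nat.lt_succ_of_le h⟩ else 0) j) ∧
            f ω x0 = k + 1 ∧ ∀ j, j < x0 → f ω j ≠ k + 1} := by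
      intro ω hω
      refine Set.mem_iUnion.mpr ⟨fun m => f ω m, hω.1, ?_, hω.2.1, hω.2.2⟩
      intro j hj
      simp only [dif_pos hj]
    apply measure_mono_null hcover
    apply measure_iUnion_null
    intro v
    set vext : ℕ → ℕ :=
      fun m => if h : m ≤ x0 then v ⟨m, Nat.lt_succ_of_le h⟩ else 0 with hvext
    by_cases hcond : vext x0 = k + 1 ∧ ∀ j, j < x0 → vext j ≠ k + 1
    · apply measure_mono_null _ (key_zero P hk hmeas hN hexch x0 vext hcond.1 hcond.2)
      rintro ω ⟨h1, h2, _, _⟩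
      exact ⟨h1, h2⟩
    · apply measure_mono_null _ (measure_empty (μ := P))
      rintro ω ⟨h1, h2, h3, h4⟩
      exact hcond ⟨by rw [← h2 x0 le_rfl]; exact h3,
        fun j hj => by rw [← h2 j (by omega)]; exact h4 j hj⟩
  apply measure_mono_null _ (measure_union_null hN (measure_iUnion_null hmain))
  intro ω hω
  simp only [Set.mem_setOf_eq] at hω
  push_neg at hω
  obtain ⟨i, hi⟩ := hω
  by_cases hC : IsConstrainedRGS ρ (f ω)
  · refine Set.mem_union_right _ ?_
    have hsup : k + 1 ≤ (Finset.range (i + 1)).sup (f ω) := by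
      have := Finset.le_sup (f := f ω) (Finset.mem_range.mpr (show i < i + 1 by omega))
      omega
    obtain ⟨j, hj, hjv⟩ := rgs_exists_of_le_sup hC.1 i (k + 1) hsup
    have hex : ∃ m, f ω m = k + 1 := ⟨j, hjv⟩
    exact Set.mem_iUnion.mpr ⟨Nat.find hex, hC, Nat.find_spec hex,
      fun m hm => Nat.find_min hex hm⟩
  · exact Set.mem_union_left _ hC
end

section
/- Let (P_1, ..., P_ℓ) be nonnegative reals with P_1 + ... + P_ℓ ≤ 1, and set H_j = 1 - Σ_{i=1}^j P_i (with H_0 = 1). For a constrained composition λ = (λ_1,...,λ_ℓ) of n, the probability that the sequential construction (where each new element joins block j < current last block with probability P_j, joins a not-yet-full last block with probability H_{j-1} when the last block is block j with fewer than ρ_j elements, joins a full last block j with probability P_j, or starts a new block with probability H_j) produces a partition of [n] of shape λ equals d(λ) · [∏_{j=1}^{ℓ-1} H_{j-1}^{ρ_j} P_j^{λ_j - ρ_j}] · H_{ℓ-1}^{min(ρ_ℓ, λ_ℓ)} · P_ℓ^{max(λ_ℓ - ρ_ℓ, 0)}, where d(λ) = ∏_{j=1}^{ℓ-1} C(Λ_j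 - ρ_j, λ_j - ρ_j) with Λ_j = λ_j + ... + λ_ℓ. -/
open scoped Classical

/-- Increase part `j` of a shape by one (starting a new block of size 1 if `j`
is one past the last block). -/
def addAt (μ : List ℕ) (j : ℕ) : List ℕ :=
  if j < μ.length then μ.set j (μ.getD j 0 + 1) else μ ++ [1]

/-- The shape after the first `k` elements have been assigned according to the
assignment sequence `a` (`a i` = block joined by element `i+1`). -/
def shapeAfter (a : ℕ → ℕ) : ℕ → List ℕ
  | 0 => []
  | k + 1 => addAt (shapeAfter a k) (a k)

/-- One-step probability of the sequential construction: from current shape `μ`,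
the next element joins block `j < ℓ - 1` with probability `P j`; joins the last
block with probability `1 - ∑_{i<ℓ-1} P i` if it is not yet full (fewer than
`ρ` elements) and with probability `P (ℓ-1)` if it is full; starts a new block
with probability `1 - ∑_{i<ℓ} P i` (only allowed when the last block is full). -/
noncomputable def stepProb (ρ : ℕ → ℕ) (P : ℕ → ℝ) (μ : List ℕ) (j : ℕ) : ℝ :=
  if j + 1 < μ.length then P j
  else if j + 1 = μ.length then
    (if μ.getLastD 0 < ρ j then 1 - ∑ i ∈ Finset.range j, P i else P j)
  else if j = μ.length then
    (if μ = [] then 1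
     else if ρ (μ.length - 1) ≤ μ.getLastD 0 then 1 - ∑ i ∈ Finset.range j, P i
     else 0)
  else 0

/-- Probability that the sequential construction produces a partition of `[n]`
of shape `lam`: sum over all assignment sequences of the product of step
probabilities. -/
noncomputable def shapeProb (ρ : ℕ → ℕ) (P : ℕ → ℝ) (n : ℕ) (lam : List ℕ) : ℝ :=
  ∑ a : Fin n → Fin n,
    (if shapeAfter (fun k => if h : k < n then (a ⟨k, h⟩ : ℕ) else 0) n = lam then
      ∏ k ∈ Finset.range n,
        stepProb ρ P (shapeAfter (fun k' => if h : k' < n then (a ⟨k', h⟩ : ℕ) else 0) k)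
          (if h : k < n then (a ⟨k, h⟩ : ℕ) else 0)
    else 0)

def extFn {n m : ℕ} (b : Fin n → Fin m) : ℕ → ℕ := fun k => if h : k < n then (b ⟨k, h⟩ : ℕ) else 0

lemma shapeProb_def' (ρ : ℕ → ℕ) (P : ℕ → ℝ) (n : ℕ) (lam : List ℕ) :
    shapeProb ρ P n lam = ∑ b : Fin n → Fin n,
      (if shapeAfter (extFn b) n = lam then
        ∏ k ∈ Finset.range n, stepProb ρ P (shapeAfter (extFn b) k) (extFn b k) else 0) := rfl

lemma addAt_length_le (μ : List ℕ) (j : ℕ) : (addAt μ j).length ≤ μ.length + 1 := by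
  unfold addAt; split <;> simp

lemma shapeAfter_length_le (a : ℕ → ℕ) (k : ℕ) : (shapeAfter a k).length ≤ k := by
  induction k with
  | zero => simp [shapeAfter]
  | succ k ih => exact le_trans (addAt_length_le _ _) (by omega)

lemma shapeAfter_congr {a b : ℕ → ℕ} (k : ℕ) (h : ∀ i < k, a i = b i) :
    shapeAfter a k = shapeAfter b k := by
  induction k with
  | zero => rfl
  | succ k ih =>
    simp only [shapeAfter, ih (fun i hi => h i (by omega)), h k (by omega)]

lemma stepProb_of_gt (ρ : ℕ → ℕ) (P : ℕ → ℝ) {μ : List ℕ} {j : ℕ} (h : μ.length < j) :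
    stepProb ρ P μ j = 0 := by
  unfold stepProb
  rw [if_neg (by omega), if_neg (by omega), if_neg (by omega)]

lemma sum_ext_mul (ρ : ℕ → ℕ) (P : ℕ → ℝ) (n : ℕ) (ν : List ℕ) (j : ℕ) :
    (∑ b : Fin n → Fin (n+1), if shapeAfter (extFn b) n = ν then
      (∏ k ∈ Finset.range n, stepProb ρ P (shapeAfter (extFn b) k) (extFn b k)) *
        stepProb ρ P (shapeAfter (extFn b) n) j else 0)
    = shapeProb ρ P n ν * stepProb ρ P ν j := by
  have step1 : (∑ b : Fin n → Fin (n+1), if shapeAfter (extFn b) n = ν then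
      (∏ k ∈ Finset.range n, stepProb ρ P (shapeAfter (extFn b) k) (extFn b k)) *
        stepProb ρ P (shapeAfter (extFn b) n) j else 0)
      = (∑ b : Fin n → Fin (n+1), if shapeAfter (extFn b) n = ν then
        (∏ k ∈ Finset.range n, stepProb ρ P (shapeAfter (extFn b) k) (extFn b k)) else 0) *
        stepProb ρ P ν j := by
    rw [Finset.sum_mul]
    apply Finset.sum_congr rfl
    intro b _
    split
    · rename_i h; rw [h]
    · rw [zero_mul]
  rw [step1]
  congr 1
  -- codomain reduction
  let F : (Fin n → Fin n) → (Fin n → Fin (n+1)) := fun c i => (c i).castSucc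
  have hFinj : Function.Injective F := by
    intro c d h
    funext i
    have := congrFun h i
    simpa [F, Fin.castSucc_inj] using this
  have hext : ∀ c : Fin n → Fin n, extFn (F c) = extFn c := by
    intro c
    funext k
    unfold extFn
    by_cases h : k < n
    · rw [dif_pos h, dif_pos h]; simp [F]
    · rw [dif_neg h, dif_neg h]
  rw [shapeProb_def']
  have vanish : ∀ b ∈ Finset.univ, b ∉ Finset.univ.image F →
      (if shapeAfter (extFn b) n = ν then
        (∏ k ∈ Finset.range n, stepProb ρ P (shapeAfter (extFn b) k) (extFn b k)) else 0) = 0 := by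
    intro b _ hb
    have hlast : ∃ i : Fin n, b i = Fin.last n := by
      by_contra hc
      push_neg at hc
      apply hb
      refine Finset.mem_image.2 ⟨fun i => ⟨(b i : ℕ), ?_⟩, Finset.mem_univ _, ?_⟩
      · have := (b i).isLt
        have hne : (b i : ℕ) ≠ n := fun h => hc i (Fin.ext h)
        omega
      · funext i
        apply Fin.ext
        simp [F, Fin.coe_castSucc]
    obtain ⟨i, hi⟩ := hlast
    have hz : (∏ k ∈ Finset.range n, stepProb ρ P (shapeAfter (extFn b) k) (extFn b k)) = 0 := by
      apply Finset.prod_eq_zero (Finset.mem_range.2 i.isLt)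
      have hbv : extFn b (i : ℕ) = n := by
        unfold extFn
        rw [dif_pos i.isLt]
        simp [Fin.eta, hi]
      rw [hbv]
      exact stepProb_of_gt ρ P (lt_of_le_of_lt (shapeAfter_length_le _ _) i.isLt)
    rw [hz]
    split <;> rfl
  calc (∑ b : Fin n → Fin (n+1), if shapeAfter (extFn b) n = ν then
        (∏ k ∈ Finset.range n, stepProb ρ P (shapeAfter (extFn b) k) (extFn b k)) else 0)
      = ∑ b ∈ Finset.univ.image F, (if shapeAfter (extFn b) n = ν then
        (∏ k ∈ Finset.range n, stepProb ρ P (shapeAfter (extFn b) k) (extFn b k)) else 0) :=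
        (Finset.sum_subset (Finset.subset_univ _) vanish).symm
    _ = ∑ c : Fin n → Fin n, (if shapeAfter (extFn (F c)) n = ν then
        (∏ k ∈ Finset.range n, stepProb ρ P (shapeAfter (extFn (F c)) k) (extFn (F c) k)) else 0) :=
        Finset.sum_image (fun x _ y _ h => hFinj h)
    _ = ∑ c : Fin n → Fin n, (if shapeAfter (extFn c) n = ν then
        (∏ k ∈ Finset.range n, stepProb ρ P (shapeAfter (extFn c) k) (extFn c k)) else 0) := by
        apply Finset.sum_congr rfl
        intro c _
        rw [hext c]

lemma getD_set_self (l : List ℕ) {j : ℕ} (h : j < l.length) (v : ℕ) :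
    (l.set j v).getD j 0 = v := by
  rw [List.getD_eq_getElem _ _ (by simpa using h), List.getElem_set_self]

lemma getD_set_ne (l : List ℕ) {i j : ℕ} (h : j ≠ i) (v : ℕ) :
    (l.set j v).getD i 0 = l.getD i 0 := by
  by_cases hi : i < l.length
  · rw [List.getD_eq_getElem _ _ (by simpa using hi), List.getD_eq_getElem _ _ hi,
      List.getElem_set_ne h]
  · rw [List.getD_eq_default _ _ (by simpa using not_lt.1 hi),
      List.getD_eq_default _ _ (by simpa using not_lt.1 hi)]

lemma set_getD_self (l : List ℕ) {j : ℕ} (h : j < l.length) : l.set j (l.getD j 0) = l := by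
  apply List.ext_getElem (by simp)
  intro i h1 h2
  by_cases hij : i = j
  · subst hij; rw [List.getElem_set_self, List.getD_eq_getElem _ _ h2]
  · rw [List.getElem_set_ne (fun hh => hij hh.symm)]

lemma getLastD_eq_getD (l : List ℕ) : l.getLastD 0 = l.getD (l.length - 1) 0 := by
  cases l with
  | nil => rfl
  | cons a t =>
    rw [List.getLastD_eq_getLast?, List.getLast?_eq_getElem?, List.getD_eq_getElem?_getD]

lemma eq_dropLast_concat (l : List ℕ) (h : l ≠ []) :
    l = l.dropLast ++ [l.getLastD 0] := by
  conv_lhs => rw [← List.dropLast_append_getLast h]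
  rw [getLastD_eq_getD, List.getLast_eq_getElem, List.getD_eq_getElem _ _ (by
    cases l with | nil => simp at h | cons a t => simp)]

lemma point (ρ : ℕ → ℕ) (P : ℕ → ℝ) (lam μ : List ℕ) (j : ℕ) (x : ℝ) :
    (if addAt μ j = lam then x * stepProb ρ P μ j else 0)
    = (if 1 ≤ lam.getD j 0 ∧ j < lam.length then
        (if μ = lam.set j (lam.getD j 0 - 1) then x * stepProb ρ P μ j else 0) else 0)
    + (if lam ≠ [] ∧ lam.getLastD 0 = 1 ∧ j = lam.length - 1 then
        (if μ = lam.dropLast then x * stepProb ρ P μ j else 0) else 0) := by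
  by_cases hj : j < μ.length
  · have he : addAt μ j = μ.set j (μ.getD j 0 + 1) := if_pos hj
    by_cases hl : addAt μ j = lam
    · rw [he] at hl
      subst hl
      have h1 : (μ.set j (μ.getD j 0 + 1)).getD j 0 = μ.getD j 0 + 1 := getD_set_self μ hj _
      have h2 : μ = (μ.set j (μ.getD j 0 + 1)).set j ((μ.set j (μ.getD j 0 + 1)).getD j 0 - 1) := by
        rw [h1, Nat.add_sub_cancel, List.set_set, set_getD_self μ hj]
      have h3 : μ ≠ (μ.set j (μ.getD j 0 + 1)).dropLast := by
        intro hc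
        have := congrArg List.length hc
        simp at this
        omega
      rw [if_pos he, if_pos ⟨by omega, by simpa using hj⟩, if_pos h2, if_neg h3]
      simp
    · have h3 : μ ≠ lam.set j (lam.getD j 0 - 1) ∨ ¬(1 ≤ lam.getD j 0 ∧ j < lam.length) := by
        by_contra hc
        push_neg at hc
        obtain ⟨hc1, hc2⟩ := hc
        apply hl
        rw [he, hc1, List.set_set, getD_set_self lam (by omega) _, Nat.sub_add_cancel hc2.1,
          set_getD_self lam hc2.2]
      have h4 : μ ≠ lam.dropLast ∨ ¬(lam ≠ [] ∧ lam.getLastD 0 = 1 ∧ j = lam.length - 1) := by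
        by_contra hc
        push_neg at hc
        obtain ⟨hc1, hc2, hc3, hc4⟩ := hc
        have : μ.length = lam.length - 1 := by rw [hc1]; simp
        have hlamlen : 1 ≤ lam.length := by
          cases lam with | nil => exact absurd rfl hc2 | cons a t => simp
        omega
      rw [if_neg hl]
      rcases h3 with h3 | h3
      · rcases h4 with h4 | h4
        · rw [if_neg h3, if_neg h4]; simp [ite_self]
        · rw [if_neg h3, if_neg h4]; simp [ite_self]
      · rcases h4 with h4 | h4
        · rw [if_neg h3, if_neg h4]; simp [ite_self]
        · rw [if_neg h3, if_neg h4]; simp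
  · have he : addAt μ j = μ ++ [1] := if_neg hj
    by_cases hj2 : j = μ.length
    · by_cases hl : addAt μ j = lam
      · rw [he] at hl
        subst hl
        have hlast : (μ ++ [1]).getLastD 0 = 1 := by
          rw [List.getLastD_concat]
        have hdl : μ = (μ ++ [1]).dropLast := by rw [List.dropLast_concat]
        have hgd : (μ ++ [1]).getD j 0 = 1 := by
          subst hj2; simp [List.getD_eq_getElem?_getD]
        have h3 : μ ≠ (μ ++ [1]).set j ((μ ++ [1]).getD j 0 - 1) := by
          intro hc
          have := congrArg List.length hc
          simp at this
        rw [if_pos he, if_pos ⟨by omega, by simp only [List.length_append, List.length_cons, List.length_nil]; omega⟩, if_neg h3,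
          if_pos ⟨by simp, hlast, by simp [hj2]⟩, if_pos hdl]
        simp
      · have h3 : ∀ c : Prop, ¬(μ = lam.set j (lam.getD j 0 - 1) ∧ c ∧ j < lam.length) := by
          intro c hc
          have := congrArg List.length hc.1
          simp at this
          omega
        have h4 : μ ≠ lam.dropLast ∨ ¬(lam ≠ [] ∧ lam.getLastD 0 = 1 ∧ j = lam.length - 1) := by
          by_contra hc
          push_neg at hc
          obtain ⟨hc1, hc2, hc3, hc4⟩ := hc
          apply hl
          rw [he]
          conv_rhs => rw [eq_dropLast_concat lam hc2]
          rw [← hc1, hc3]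
        rw [if_neg hl]
        have p1 : (if 1 ≤ lam.getD j 0 ∧ j < lam.length then
            (if μ = lam.set j (lam.getD j 0 - 1) then x * stepProb ρ P μ j else 0) else 0) = 0 := by
          split
          · rename_i hcc
            rw [if_neg (fun hm => h3 True ⟨hm, trivial, hcc.2⟩)]
          · rfl
        rw [p1]
        rcases h4 with h4 | h4
        · rw [if_neg h4]; simp [ite_self]
        · rw [if_neg h4]; simp
    · -- j > μ.length
      have hgt : μ.length < j := by omega
      have hs : stepProb ρ P μ j = 0 := stepProb_of_gt ρ P hgt
      have p1 : (if 1 ≤ lam.getD j 0 ∧ j < lam.length then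
          (if μ = lam.set j (lam.getD j 0 - 1) then x * stepProb ρ P μ j else 0) else 0) = 0 := by
        split
        · rename_i hcc
          split
          · rename_i hm
            have := congrArg List.length hm
            simp at this
            omega
          · rfl
        · rfl
      have p2 : (if lam ≠ [] ∧ lam.getLastD 0 = 1 ∧ j = lam.length - 1 then
          (if μ = lam.dropLast then x * stepProb ρ P μ j else 0) else 0) = 0 := by
        split
        · rename_i hcc
          split
          · rename_i hm
            have := congrArg List.length hm
            have hlamlen : 1 ≤ lam.length := by
              cases lam with | nil => exact absurd rfl hcc.1 | cons a t => simp
            simp at this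
            omega
          · rfl
        · rfl
      rw [p1, p2, hs]
      simp [ite_self]

set_option maxHeartbeats 1000000 in
lemma recursion (ρ : ℕ → ℕ) (P : ℕ → ℝ) (n : ℕ) (lam : List ℕ) :
    shapeProb ρ P (n+1) lam = ∑ j ∈ Finset.range (n+1),
      ((if 1 ≤ lam.getD j 0 ∧ j < lam.length then
          shapeProb ρ P n (lam.set j (lam.getD j 0 - 1)) *
            stepProb ρ P (lam.set j (lam.getD j 0 - 1)) j else 0)
       + (if lam ≠ [] ∧ lam.getLastD 0 = 1 ∧ j = lam.length - 1 then
          shapeProb ρ P n lam.dropLast * stepProb ρ P lam.dropLast j else 0)) := by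
  rw [shapeProb_def']
  rw [← (Fin.snocEquiv (fun _ : Fin (n+1) => Fin (n+1))).sum_comp]
  rw [Fintype.sum_prod_type]
  have key : ∀ (j : Fin (n+1)) (b : Fin n → Fin (n+1)),
      (if shapeAfter (extFn ((Fin.snocEquiv (fun _ : Fin (n+1) => Fin (n+1))) (j, b))) (n+1) = lam
        then ∏ k ∈ Finset.range (n+1),
          stepProb ρ P (shapeAfter (extFn ((Fin.snocEquiv (fun _ : Fin (n+1) => Fin (n+1))) (j, b))) k)
            (extFn ((Fin.snocEquiv (fun _ : Fin (n+1) => Fin (n+1))) (j, b)) k)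
        else 0)
      = (if addAt (shapeAfter (extFn b) n) (j : ℕ) = lam then
          (∏ k ∈ Finset.range n, stepProb ρ P (shapeAfter (extFn b) k) (extFn b k)) *
            stepProb ρ P (shapeAfter (extFn b) n) (j : ℕ) else 0) := by
    intro j b
    have he : ((Fin.snocEquiv (fun _ : Fin (n+1) => Fin (n+1))) (j, b)) = Fin.snoc b j := by
      funext i; rfl
    rw [he]
    have hext : ∀ i, i < n → extFn (Fin.snoc b j) i = extFn b i := by
      intro i hi
      unfold extFn
      rw [dif_pos (by omega : i < n + 1), dif_pos hi]
      have h1 : (⟨i, by omega⟩ : Fin (n+1)) = Fin.castSucc ⟨i, hi⟩ := rfl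
      rw [h1, Fin.snoc_castSucc]
    have hn : extFn (Fin.snoc b j) n = (j : ℕ) := by
      unfold extFn
      rw [dif_pos (by omega : n < n + 1)]
      have h1 : (⟨n, by omega⟩ : Fin (n+1)) = Fin.last n := rfl
      rw [h1, Fin.snoc_last]
    have hsh : ∀ k, k ≤ n → shapeAfter (extFn (Fin.snoc b j)) k = shapeAfter (extFn b) k :=
      fun k hk => shapeAfter_congr k (fun i hi => hext i (by omega))
    have h1 : shapeAfter (extFn (Fin.snoc b j)) (n+1) = addAt (shapeAfter (extFn b) n) (j : ℕ) := by
      show addAt (shapeAfter (extFn (Fin.snoc b j)) n) (extFn (Fin.snoc b j) n) = _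
      rw [hsh n le_rfl, hn]
    have h2 : (∏ k ∈ Finset.range (n+1),
        stepProb ρ P (shapeAfter (extFn (Fin.snoc b j)) k) (extFn (Fin.snoc b j) k))
        = (∏ k ∈ Finset.range n, stepProb ρ P (shapeAfter (extFn b) k) (extFn b k)) *
            stepProb ρ P (shapeAfter (extFn b) n) (j : ℕ) := by
      rw [Finset.prod_range_succ]
      congr 1
      · apply Finset.prod_congr rfl
        intro k hk
        rw [hsh k (le_of_lt (Finset.mem_range.1 hk)), hext k (Finset.mem_range.1 hk)]
      · rw [hsh n le_rfl, hn]
    rw [h1, h2]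
  calc (∑ j : Fin (n+1), ∑ b : Fin n → Fin (n+1),
        (if shapeAfter (extFn ((Fin.snocEquiv (fun _ : Fin (n+1) => Fin (n+1))) (j, b))) (n+1) = lam
          then ∏ k ∈ Finset.range (n+1),
            stepProb ρ P (shapeAfter (extFn ((Fin.snocEquiv (fun _ : Fin (n+1) => Fin (n+1))) (j, b))) k)
              (extFn ((Fin.snocEquiv (fun _ : Fin (n+1) => Fin (n+1))) (j, b)) k)
          else 0))
      = ∑ j : Fin (n+1), ∑ b : Fin n → Fin (n+1),
        (if addAt (shapeAfter (extFn b) n) (j : ℕ) = lam then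
          (∏ k ∈ Finset.range n, stepProb ρ P (shapeAfter (extFn b) k) (extFn b k)) *
            stepProb ρ P (shapeAfter (extFn b) n) (j : ℕ) else 0) :=
      Finset.sum_congr rfl fun j _ => Finset.sum_congr rfl fun b _ => key j b
    _ = ∑ j ∈ Finset.range (n+1), ∑ b : Fin n → Fin (n+1),
        (if addAt (shapeAfter (extFn b) n) j = lam then
          (∏ k ∈ Finset.range n, stepProb ρ P (shapeAfter (extFn b) k) (extFn b k)) *
            stepProb ρ P (shapeAfter (extFn b) n) j else 0) :=
      Fin.sum_univ_eq_sum_range (fun jn => ∑ b : Fin n → Fin (n+1),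
        (if addAt (shapeAfter (extFn b) n) jn = lam then
          (∏ k ∈ Finset.range n, stepProb ρ P (shapeAfter (extFn b) k) (extFn b k)) *
            stepProb ρ P (shapeAfter (extFn b) n) jn else 0)) (n+1)
    _ = ∑ j ∈ Finset.range (n+1),
      ((if 1 ≤ lam.getD j 0 ∧ j < lam.length then
          shapeProb ρ P n (lam.set j (lam.getD j 0 - 1)) *
            stepProb ρ P (lam.set j (lam.getD j 0 - 1)) j else 0)
       + (if lam ≠ [] ∧ lam.getLastD 0 = 1 ∧ j = lam.length - 1 then
          shapeProb ρ P n lam.dropLast * stepProb ρ P lam.dropLast j else 0)) := by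
      apply Finset.sum_congr rfl
      intro j _
      have hpt : ∀ b : Fin n → Fin (n+1),
          (if addAt (shapeAfter (extFn b) n) j = lam then
            (∏ k ∈ Finset.range n, stepProb ρ P (shapeAfter (extFn b) k) (extFn b k)) *
              stepProb ρ P (shapeAfter (extFn b) n) j else 0)
          = (if 1 ≤ lam.getD j 0 ∧ j < lam.length then
              (if shapeAfter (extFn b) n = lam.set j (lam.getD j 0 - 1) then
                (∏ k ∈ Finset.range n, stepProb ρ P (shapeAfter (extFn b) k) (extFn b k)) *
                  stepProb ρ P (shapeAfter (extFn b) n) j else 0) else 0)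
            + (if lam ≠ [] ∧ lam.getLastD 0 = 1 ∧ j = lam.length - 1 then
              (if shapeAfter (extFn b) n = lam.dropLast then
                (∏ k ∈ Finset.range n, stepProb ρ P (shapeAfter (extFn b) k) (extFn b k)) *
                  stepProb ρ P (shapeAfter (extFn b) n) j else 0) else 0) :=
        fun b => point ρ P lam (shapeAfter (extFn b) n) j _
      rw [Finset.sum_congr rfl (fun b _ => hpt b), Finset.sum_add_distrib]
      congr 1
      · by_cases hc : 1 ≤ lam.getD j 0 ∧ j < lam.length
        · simp only [if_pos hc]
          exact sum_ext_mul ρ P n _ j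
        · simp only [if_neg hc, Finset.sum_const_zero]
      · by_cases hc : lam ≠ [] ∧ lam.getLastD 0 = 1 ∧ j = lam.length - 1
        · simp only [if_pos hc]
          exact sum_ext_mul ρ P n _ j
        · simp only [if_neg hc, Finset.sum_const_zero]

lemma getD_dropLast (l : List ℕ) {i : ℕ} (h : i + 1 < l.length) :
    l.dropLast.getD i 0 = l.getD i 0 := by
  rw [List.getD_eq_getElem _ _ (by simp; omega), List.getD_eq_getElem _ _ (by omega),
    List.getElem_dropLast]

def Bad (ρ : ℕ → ℕ) (μ : List ℕ) : Prop :=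
  (∃ i, i < μ.length ∧ μ.getD i 0 = 0) ∨ (∃ i, i + 1 < μ.length ∧ μ.getD i 0 < ρ i)

lemma shapeProb_zero_of_bad (ρ : ℕ → ℕ) (P : ℕ → ℝ) :
    ∀ n μ, Bad ρ μ → shapeProb ρ P n μ = 0 := by
  intro n
  induction n with
  | zero =>
    intro μ hbad
    have hne : ([] : List ℕ) ≠ μ := by
      rintro rfl
      rcases hbad with ⟨i, hi, _⟩ | ⟨i, hi, _⟩ <;> simp at hi
    rw [shapeProb_def']
    simp [shapeAfter, hne]
  | succ n ih =>
    intro μ hbad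
    rw [recursion]
    apply Finset.sum_eq_zero
    intro j _
    have hp1 : (if 1 ≤ μ.getD j 0 ∧ j < μ.length then
        shapeProb ρ P n (μ.set j (μ.getD j 0 - 1)) *
          stepProb ρ P (μ.set j (μ.getD j 0 - 1)) j else 0) = 0 := by
      split
      · rename_i hc
        obtain ⟨hc1, hc2⟩ := hc
        have hbadν : Bad ρ (μ.set j (μ.getD j 0 - 1)) := by
          rcases hbad with ⟨i, hi, hz⟩ | ⟨i, hi, hlt⟩
          · have hij : j ≠ i := by rintro rfl; omega
            exact Or.inl ⟨i, by simpa using hi, by rw [getD_set_ne μ hij]; exact hz⟩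
          · by_cases hij : j = i
            · subst hij
              exact Or.inr ⟨j, by simpa using hi, by rw [getD_set_self μ hc2]; omega⟩
            · exact Or.inr ⟨i, by simpa using hi, by rw [getD_set_ne μ hij]; exact hlt⟩
        rw [ih _ hbadν, zero_mul]
      · rfl
    have hp2 : (if μ ≠ [] ∧ μ.getLastD 0 = 1 ∧ j = μ.length - 1 then
        shapeProb ρ P n μ.dropLast * stepProb ρ P μ.dropLast j else 0) = 0 := by
      split
      · rename_i hc
        obtain ⟨hc1, hc2, hc3⟩ := hc
        have hlen : 1 ≤ μ.length := by
          cases μ with | nil => exact absurd rfl hc1 | cons a t => simp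
        rcases hbad with ⟨i, hi, hz⟩ | ⟨i, hi, hlt⟩
        · by_cases hil : i + 1 < μ.length
          · have : Bad ρ μ.dropLast :=
              Or.inl ⟨i, by simp; omega, by rw [getD_dropLast μ hil]; exact hz⟩
            rw [ih _ this, zero_mul]
          · have hieq : i = μ.length - 1 := by omega
            rw [getLastD_eq_getD, ← hieq] at hc2
            omega
        · by_cases hil : i + 1 < μ.length - 1
          · have : Bad ρ μ.dropLast :=
              Or.inr ⟨i, by simp; omega, by rw [getD_dropLast μ (by omega)]; exact hlt⟩
            rw [ih _ this, zero_mul]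
          · have hieq : i = μ.length - 2 := by omega
            have hdlen : μ.dropLast.length = μ.length - 1 := by simp
            have hsz : stepProb ρ P μ.dropLast j = 0 := by
              unfold stepProb
              rw [if_neg (by omega), if_neg (by omega), if_pos (by omega)]
              rw [if_neg (by
                intro hnil
                have := congrArg List.length hnil
                rw [hdlen] at this
                simp at this
                omega)]
              rw [if_neg (by
                rw [getLastD_eq_getD, hdlen]
                have h1 : μ.dropLast.getD (μ.length - 1 - 1) 0 = μ.getD i 0 := by
                  rw [hieq]
                  have : μ.length - 1 - 1 = μ.length - 2 := by omega
                  rw [this]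
                  exact getD_dropLast μ (by omega)
                rw [h1]
                have h2 : μ.length - 1 - 1 = i := by omega
                rw [h2]
                omega)]
            rw [hsz, mul_zero]
      · rfl
    rw [hp1, hp2, add_zero]

lemma telescope (m : ℕ) (N a : ℕ → ℕ) (hN : ∀ j, j < m → 1 ≤ N j) :
    (∑ j ∈ Finset.range m, if 1 ≤ a j then
       (∏ i ∈ Finset.range j, (N i - 1).choose (a i)) * ((N j - 1).choose (a j - 1)) *
       (∏ i ∈ Finset.Ico (j+1) m, (N i).choose (a i)) else 0)
     + ∏ j ∈ Finset.range m, (N j - 1).choose (a j)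
    = ∏ j ∈ Finset.range m, (N j).choose (a j) := by
  induction m with
  | zero => simp
  | succ m ih =>
    rw [Finset.sum_range_succ, Finset.prod_range_succ, Finset.prod_range_succ]
    have h1 : ∀ j ∈ Finset.range m, (if 1 ≤ a j then
        (∏ i ∈ Finset.range j, (N i - 1).choose (a i)) * ((N j - 1).choose (a j - 1)) *
        (∏ i ∈ Finset.Ico (j+1) (m+1), (N i).choose (a i)) else 0)
        = (if 1 ≤ a j then
        (∏ i ∈ Finset.range j, (N i - 1).choose (a i)) * ((N j - 1).choose (a j - 1)) *
        (∏ i ∈ Finset.Ico (j+1) m, (N i).choose (a i)) else 0) * (N m).choose (a m) := by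
      intro j hj
      have hjm := Finset.mem_range.1 hj
      rw [Finset.prod_Ico_succ_top (by omega : j + 1 ≤ m)]
      split
      · ring
      · rw [zero_mul]
    rw [Finset.sum_congr rfl h1, ← Finset.sum_mul]
    have h2 : (if 1 ≤ a m then
        (∏ i ∈ Finset.range m, (N i - 1).choose (a i)) * ((N m - 1).choose (a m - 1)) *
        (∏ i ∈ Finset.Ico (m+1) (m+1), (N i).choose (a i)) else 0)
        + (∏ j ∈ Finset.range m, (N j - 1).choose (a j)) * ((N m - 1).choose (a m))
        = (∏ j ∈ Finset.range m, (N j - 1).choose (a j)) * (N m).choose (a m) := by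
      rw [Finset.Ico_self, Finset.prod_empty, mul_one]
      cases ham : a m with
      | zero => rw [if_neg (by omega)]; simp
      | succ c =>
        rw [if_pos (by omega)]
        have hNm : 1 ≤ N m := hN m (by omega)
        obtain ⟨d, hd⟩ : ∃ d, N m = d + 1 := ⟨N m - 1, by omega⟩
        rw [hd, Nat.succ_sub_one, Nat.succ_sub_one, Nat.choose_succ_succ]
        ring
    rw [add_assoc, h2, ← add_mul, ih (fun j hj => hN j (by omega))]

lemma drop_sum_succ (l : List ℕ) {i : ℕ} (h : i < l.length) :
    (l.drop i).sum = l.getD i 0 + (l.drop (i+1)).sum := by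
  rw [List.drop_eq_getElem_cons h, List.sum_cons, List.getD_eq_getElem _ _ h]

lemma drop_sum_succ_le (l : List ℕ) (i : ℕ) : (l.drop (i+1)).sum ≤ (l.drop i).sum := by
  by_cases h : i < l.length
  · rw [drop_sum_succ l h]; omega
  · rw [List.drop_eq_nil_of_le (by omega), List.drop_eq_nil_of_le (by omega)]

lemma drop_sum_mono (l : List ℕ) {i k : ℕ} (h : i ≤ k) :
    (l.drop k).sum ≤ (l.drop i).sum := by
  induction k with
  | zero => have : i = 0 := by omega
            subst this; exact le_rfl
  | succ k ih =>
    by_cases hik : i = k + 1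
    · subst hik; exact le_rfl
    · exact le_trans (drop_sum_succ_le l k) (ih (by omega))

lemma drop_last_sum (l : List ℕ) (h : l ≠ []) :
    (l.drop (l.length - 1)).sum = l.getD (l.length - 1) 0 := by
  have hlen : 1 ≤ l.length := by cases l with | nil => exact absurd rfl h | cons a t => simp
  rw [drop_sum_succ l (by omega)]
  have : l.length - 1 + 1 = l.length := by omega
  rw [this, List.drop_length, List.sum_nil, add_zero]

lemma sum_set_getD (l : List ℕ) {j : ℕ} (h : j < l.length) (v : ℕ) :
    (l.set j v).sum + l.getD j 0 = l.sum + v := by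
  induction l generalizing j with
  | nil => simp at h
  | cons a t ih =>
    cases j with
    | zero => simp [List.getD_cons_zero]; omega
    | succ j =>
      simp only [List.set_cons_succ, List.sum_cons, List.getD_cons_succ]
      have := ih (by simpa using h) 
      omega

lemma drop_set_sum (l : List ℕ) {i j v : ℕ} (hij : i ≤ j) (hj : j < l.length) :
    ((l.set j v).drop i).sum + l.getD j 0 = (l.drop i).sum + v := by
  rw [List.drop_set, if_neg (by omega)]
  have h1 : j - i < (l.drop i).length := by simp; omega
  have h2 : (l.drop i).getD (j - i) 0 = l.getD j 0 := by
    rw [List.getD_eq_getElem _ _ h1, List.getD_eq_getElem _ _ hj, List.getElem_drop]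
    congr 1
    omega
  rw [← h2]
  exact sum_set_getD _ h1 _

lemma drop_set_of_lt (l : List ℕ) {i j : ℕ} (v : ℕ) (h : j < i) :
    (l.set j v).drop i = l.drop i := by
  rw [List.drop_set, if_pos h]

lemma dropLast_drop_sum (l : List ℕ) (h : l ≠ []) {i : ℕ} (hi : i ≤ l.length - 1) :
    (l.dropLast.drop i).sum + l.getLastD 0 = (l.drop i).sum := by
  conv_rhs => rw [eq_dropLast_concat l h]
  have hdlen : l.dropLast.length = l.length - 1 := by simp
  rw [List.drop_append_of_le_length (by omega), List.sum_append, List.sum_cons, List.sum_nil]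
  omega

lemma length_le_sum (l : List ℕ) (h : ∀ x ∈ l, 0 < x) : l.length ≤ l.sum := by
  induction l with
  | nil => simp
  | cons a t ih =>
    simp only [List.length_cons, List.sum_cons]
    have ha := h a (by simp)
    have := ih (fun x hx => h x (by simp [hx]))
    omega

lemma getD_pos (l : List ℕ) (h : ∀ x ∈ l, 0 < x) {i : ℕ} (hi : i < l.length) :
    0 < l.getD i 0 := by
  rw [List.getD_eq_getElem _ _ hi]
  exact h _ (List.getElem_mem _)

noncomputable def rhsF (ρ : ℕ → ℕ) (P : ℕ → ℝ) (lam : List ℕ) : ℝ :=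
  (∏ j ∈ Finset.range (lam.length - 1),
      ((((lam.drop j).sum - ρ j).choose (lam.getD j 0 - ρ j) : ℕ) : ℝ)) *
    (∏ j ∈ Finset.range (lam.length - 1),
      (1 - ∑ i ∈ Finset.range j, P i) ^ ρ j * P j ^ (lam.getD j 0 - ρ j)) *
    (1 - ∑ i ∈ Finset.range (lam.length - 1), P i) ^
      min (ρ (lam.length - 1)) (lam.getD (lam.length - 1) 0) *
    P (lam.length - 1) ^ (lam.getD (lam.length - 1) 0 - ρ (lam.length - 1))

lemma rhsF_eq (ρ : ℕ → ℕ) (P : ℕ → ℝ) (lam : List ℕ) {L : ℕ} (h : lam.length = L + 1) :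
    rhsF ρ P lam = (∏ j ∈ Finset.range L,
        ((((lam.drop j).sum - ρ j).choose (lam.getD j 0 - ρ j) : ℕ) : ℝ)) *
      (∏ j ∈ Finset.range L,
        (1 - ∑ i ∈ Finset.range j, P i) ^ ρ j * P j ^ (lam.getD j 0 - ρ j)) *
      (1 - ∑ i ∈ Finset.range L, P i) ^ min (ρ L) (lam.getD L 0) *
      P L ^ (lam.getD L 0 - ρ L) := by
  unfold rhsF; rw [h]; simp only [Nat.add_sub_cancel]

lemma main_lemma (ρ : ℕ → ℕ) (hρ : ∀ j, 1 ≤ ρ j) (P : ℕ → ℝ) :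
    ∀ n (lam : List ℕ), lam ≠ [] → (∀ x ∈ lam, 0 < x) →
      (∀ j, j + 1 < lam.length → ρ j ≤ lam.getD j 0) →
      lam.sum = n → shapeProb ρ P n lam = rhsF ρ P lam := by
  intro n
  induction n with
  | zero =>
    intro lam hne hpos hcon hsum
    exfalso
    cases lam with
    | nil => exact hne rfl
    | cons a t =>
      have := hpos a (by simp)
      simp only [List.sum_cons] at hsum
      omega
  | succ n ih =>
    intro lam hne hpos hcon hsum
    have hlpos : 1 ≤ lam.length := by
      cases lam with | nil => exact absurd rfl hne | cons a t => simp
    obtain ⟨L, hL⟩ : ∃ L, lam.length = L + 1 := ⟨lam.length - 1, by omega⟩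
    have hlen : L + 1 ≤ n + 1 := by
      have := length_le_sum lam hpos
      omega
    by_cases hspec : lam.sum = 1
    · -- lam = [1]
      have hL0 : lam.length = 1 := by
        have := length_le_sum lam hpos
        omega
      obtain ⟨x, hx⟩ := List.length_eq_one_iff.1 hL0
      subst hx
      simp only [List.sum_cons, List.sum_nil, add_zero] at hspec
      subst hspec
      have hn0 : n = 0 := by simp at hsum; omega
      subst hn0
      rw [recursion]
      rw [rhsF_eq ρ P _ (show ([1] : List ℕ).length = 0 + 1 by simp)]
      rw [Finset.sum_range_succ, Finset.sum_range_zero]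
      have hp1 : (if 1 ≤ ([1] : List ℕ).getD 0 0 ∧ 0 < ([1] : List ℕ).length then
          shapeProb ρ P 0 (([1] : List ℕ).set 0 (([1] : List ℕ).getD 0 0 - 1)) *
            stepProb ρ P (([1] : List ℕ).set 0 (([1] : List ℕ).getD 0 0 - 1)) 0 else 0) = 0 := by
        rw [if_pos ⟨by simp, by simp⟩]
        have hbad : Bad ρ (([1] : List ℕ).set 0 (([1] : List ℕ).getD 0 0 - 1)) := by
          refine Or.inl ⟨0, by simp, ?_⟩
          rw [getD_set_self _ (by simp)]
          simp
        rw [shapeProb_zero_of_bad ρ P 0 _ hbad, zero_mul]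
      have hp2 : (if ([1] : List ℕ) ≠ [] ∧ ([1] : List ℕ).getLastD 0 = 1 ∧
          (0 : ℕ) = ([1] : List ℕ).length - 1 then
          shapeProb ρ P 0 ([1] : List ℕ).dropLast * stepProb ρ P ([1] : List ℕ).dropLast 0
          else 0) = 1 := by
        rw [if_pos ⟨by simp, by simp, by simp⟩]
        have h1 : shapeProb ρ P 0 ([1] : List ℕ).dropLast = 1 := by
          rw [shapeProb_def']
          simp [shapeAfter]
        have h2 : stepProb ρ P ([1] : List ℕ).dropLast 0 = 1 := by
          show stepProb ρ P [] 0 = 1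
          unfold stepProb
          norm_num
        rw [h1, h2, mul_one]
      rw [hp1, hp2]
      simp [min_eq_right (hρ 0), Nat.sub_eq_zero_of_le (hρ 0)]
    · -- general case
      rw [recursion]
      simp only [hL, Nat.add_sub_cancel]
      rw [← Finset.sum_subset (Finset.range_subset_range.2 hlen) (by
        intro j hj hj2
        rw [Finset.mem_range] at hj
        rw [Finset.mem_range] at hj2
        rw [if_neg (fun hc => absurd hc.2 (by omega)),
          if_neg (fun hc => absurd hc.2.2 (by omega)), add_zero])]
      have hgd : ∀ i, i < L + 1 → 1 ≤ lam.getD i 0 := fun i hi => getD_pos lam hpos (by omega)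
      have hcon' : ∀ i, i < L → ρ i ≤ lam.getD i 0 := fun i hi => hcon i (by omega)
      have hlamL : (lam.drop L).sum = lam.getD L 0 := by
        have := drop_last_sum lam hne
        rw [hL] at this
        simpa using this
      have hdropge : ∀ i, i ≤ L → lam.getD L 0 ≤ (lam.drop i).sum := by
        intro i hi
        rw [← hlamL]
        exact drop_sum_mono lam hi
      have hdropsucc : ∀ i, i < L + 1 → (lam.drop i).sum = lam.getD i 0 + (lam.drop (i+1)).sum :=
        fun i hi => drop_sum_succ lam (by omega)
      have hN1 : ∀ i, i < L → 1 ≤ (lam.drop i).sum - ρ i := by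
        intro i hi
        have h1 := hdropsucc i (by omega)
        have h2 : lam.getD L 0 ≤ (lam.drop (i+1)).sum := hdropge (i+1) (by omega)
        have h3 := hcon' i hi
        have h4 := hgd L (by omega)
        omega
      have hC : ∀ j ∈ Finset.range (L + 1),
          ((if 1 ≤ lam.getD j 0 ∧ j < L + 1 then
            shapeProb ρ P n (lam.set j (lam.getD j 0 - 1)) *
              stepProb ρ P (lam.set j (lam.getD j 0 - 1)) j else 0)
          + (if lam ≠ [] ∧ lam.getLastD 0 = 1 ∧ j = L then
            shapeProb ρ P n lam.dropLast * stepProb ρ P lam.dropLast j else 0))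
          = (((if j < L then
              (if 1 ≤ lam.getD j 0 - ρ j then
                (∏ i ∈ Finset.range j, ((lam.drop i).sum - ρ i - 1).choose (lam.getD i 0 - ρ i)) *
                  (((lam.drop j).sum - ρ j - 1).choose (lam.getD j 0 - ρ j - 1)) *
                  (∏ i ∈ Finset.Ico (j+1) (L:ℕ), ((lam.drop i).sum - ρ i).choose (lam.getD i 0 - ρ i))
               else 0)
            else ∏ i ∈ Finset.range L, ((lam.drop i).sum - ρ i - 1).choose (lam.getD i 0 - ρ i) : ℕ) : ℝ)
          * ((∏ i ∈ Finset.range L,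
              (1 - ∑ x ∈ Finset.range i, P x) ^ ρ i * P i ^ (lam.getD i 0 - ρ i)) *
            ((1 - ∑ x ∈ Finset.range L, P x) ^ min (ρ L) (lam.getD L 0) *
              P L ^ (lam.getD L 0 - ρ L)))) := by
        intro j hj
        by_cases hjL : j < L
        · -- interior block
          rw [if_neg (show ¬(lam ≠ [] ∧ lam.getLastD 0 = 1 ∧ j = L) from
              fun hc => absurd hc.2.2 (by omega)), add_zero,
            if_pos (show 1 ≤ lam.getD j 0 ∧ j < L + 1 from ⟨hgd j (by omega), by omega⟩),
            if_pos hjL]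
          by_cases haj : 1 ≤ lam.getD j 0 - ρ j
          · rw [if_pos haj]
            have hja : ρ j + 1 ≤ lam.getD j 0 := by omega
            set ν := lam.set j (lam.getD j 0 - 1) with hν
            have hνlen : ν.length = L + 1 := by rw [hν]; simp [hL]
            have hνne : ν ≠ [] := by intro hc; rw [hc] at hνlen; simp at hνlen
            have hνpos : ∀ x ∈ ν, 0 < x := by
              intro x hx
              rcases List.mem_or_eq_of_mem_set hx with h | h
              · exact hpos x h
              · subst h
                have := hρ j
                omega
            have hνget : ∀ i, i ≠ j → ν.getD i 0 = lam.getD i 0 :=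
              fun i hi => getD_set_ne lam (fun h => hi h.symm) _
            have hνgetj : ν.getD j 0 = lam.getD j 0 - 1 := getD_set_self lam (by omega) _
            have hνcon : ∀ i, i + 1 < ν.length → ρ i ≤ ν.getD i 0 := by
              intro i hi
              rw [hνlen] at hi
              by_cases hij : i = j
              · subst hij; rw [hνgetj]; omega
              · rw [hνget i hij]; exact hcon i (by omega)
            have hνsum : ν.sum = n := by
              have h5 := sum_set_getD lam (show j < lam.length by omega) (lam.getD j 0 - 1)
              rw [← hν] at h5
              omega
            rw [ih ν hνne hνpos hνcon hνsum]
            have hstep : stepProb ρ P ν j = P j := by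
              unfold stepProb
              have hlt : j + 1 < ν.length := by omega
              rw [if_pos hlt]
            rw [hstep]
            have hνdrop : ∀ i, i ≤ j → (ν.drop i).sum + 1 = (lam.drop i).sum := by
              intro i hi
              have h5 := drop_set_sum lam hi (show j < lam.length by omega)
                (v := lam.getD j 0 - 1)
              rw [← hν] at h5
              omega
            have hνdrop2 : ∀ i, j < i → (ν.drop i).sum = (lam.drop i).sum := by
              intro i hi; rw [hν, drop_set_of_lt _ _ hi]
            rw [rhsF_eq ρ P ν hνlen]
            have hbin : (∏ i ∈ Finset.range L,
                ((((ν.drop i).sum - ρ i).choose (ν.getD i 0 - ρ i) : ℕ) : ℝ))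
                = (((∏ i ∈ Finset.range j,
                    ((lam.drop i).sum - ρ i - 1).choose (lam.getD i 0 - ρ i)) *
                  (((lam.drop j).sum - ρ j - 1).choose (lam.getD j 0 - ρ j - 1)) *
                  (∏ i ∈ Finset.Ico (j+1) L,
                    ((lam.drop i).sum - ρ i).choose (lam.getD i 0 - ρ i)) : ℕ) : ℝ) := by
              rw [← Nat.cast_prod]
              congr 1
              rw [← Finset.prod_range_mul_prod_Ico
                (fun i => ((ν.drop i).sum - ρ i).choose (ν.getD i 0 - ρ i))
                (show j + 1 ≤ L by omega), Finset.prod_range_succ]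
              have h1 : ∏ i ∈ Finset.range j, ((ν.drop i).sum - ρ i).choose (ν.getD i 0 - ρ i)
                  = ∏ i ∈ Finset.range j,
                    ((lam.drop i).sum - ρ i - 1).choose (lam.getD i 0 - ρ i) := by
                apply Finset.prod_congr rfl
                intro i hi
                have hij : i < j := Finset.mem_range.1 hi
                have hd := hνdrop i (by omega)
                have e1 : (ν.drop i).sum - ρ i = (lam.drop i).sum - ρ i - 1 := by omega
                rw [e1, hνget i (by omega)]
              have h2 : ((ν.drop j).sum - ρ j).choose (ν.getD j 0 - ρ j)
                  = ((lam.drop j).sum - ρ j - 1).choose (lam.getD j 0 - ρ j - 1) := by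
                have hd := hνdrop j le_rfl
                have e1 : (ν.drop j).sum - ρ j = (lam.drop j).sum - ρ j - 1 := by omega
                have e2 : ν.getD j 0 - ρ j = lam.getD j 0 - ρ j - 1 := by
                  rw [hνgetj]; omega
                rw [e1, e2]
              have h3 : ∏ i ∈ Finset.Ico (j+1) L, ((ν.drop i).sum - ρ i).choose (ν.getD i 0 - ρ i)
                  = ∏ i ∈ Finset.Ico (j+1) L,
                    ((lam.drop i).sum - ρ i).choose (lam.getD i 0 - ρ i) := by
                apply Finset.prod_congr rfl
                intro i hi
                have hij := (Finset.mem_Ico.1 hi).1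
                rw [hνdrop2 i (by omega), hνget i (by omega)]
              rw [h1, h2, h3]
            rw [hbin]
            have hgetL : ν.getD L 0 = lam.getD L 0 := hνget L (by omega)
            rw [hgetL]
            have hE : (∏ i ∈ Finset.range L,
                (1 - ∑ x ∈ Finset.range i, P x) ^ ρ i * P i ^ (ν.getD i 0 - ρ i)) * P j
                = ∏ i ∈ Finset.range L,
                  (1 - ∑ x ∈ Finset.range i, P x) ^ ρ i * P i ^ (lam.getD i 0 - ρ i) := by
              rw [← Finset.mul_prod_erase (Finset.range L)
                  (fun i => (1 - ∑ x ∈ Finset.range i, P x) ^ ρ i * P i ^ (ν.getD i 0 - ρ i))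
                  (Finset.mem_range.2 hjL),
                ← Finset.mul_prod_erase (Finset.range L)
                  (fun i => (1 - ∑ x ∈ Finset.range i, P x) ^ ρ i * P i ^ (lam.getD i 0 - ρ i))
                  (Finset.mem_range.2 hjL)]
              have hR : ∏ i ∈ (Finset.range L).erase j,
                  (1 - ∑ x ∈ Finset.range i, P x) ^ ρ i * P i ^ (ν.getD i 0 - ρ i)
                  = ∏ i ∈ (Finset.range L).erase j,
                  (1 - ∑ x ∈ Finset.range i, P x) ^ ρ i * P i ^ (lam.getD i 0 - ρ i) :=
                Finset.prod_congr rfl (fun i hi => by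
                  rw [hνget i (Finset.ne_of_mem_erase hi)])
              rw [hR, hνgetj,
                show lam.getD j 0 - ρ j = (lam.getD j 0 - 1 - ρ j) + 1 from by omega,
                pow_succ]
              ring
            rw [← hE]
            ring
          · -- lam_j = ρ j : predecessor is bad
            rw [if_neg haj]
            have hbad : Bad ρ (lam.set j (lam.getD j 0 - 1)) := by
              refine Or.inr ⟨j, ?_, ?_⟩
              · simp only [List.length_set]; omega
              · rw [getD_set_self lam (by omega)]
                have h6 := hcon' j hjL
                have h7 := hgd j (by omega)
                have h8 := hρ j
                omega
            rw [shapeProb_zero_of_bad ρ P n _ hbad, zero_mul, Nat.cast_zero, zero_mul]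
        · -- j = L
          have hjeq : j = L := by
            have := Finset.mem_range.1 hj
            omega
          subst hjeq
          rw [if_neg (lt_irrefl j)]
          by_cases hlast : lam.getD j 0 = 1
          · -- last block has one element: dropLast predecessor
            have hbad : Bad ρ (lam.set j (lam.getD j 0 - 1)) := by
              refine Or.inl ⟨j, ?_, ?_⟩
              · simp only [List.length_set]; omega
              · rw [getD_set_self lam (by omega)]; omega
            rw [if_pos (show 1 ≤ lam.getD j 0 ∧ j < j + 1 from ⟨hgd j (by omega), by omega⟩),
              shapeProb_zero_of_bad ρ P n _ hbad, zero_mul, zero_add]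
            have hL1 : 1 ≤ j := by
              by_contra hc
              have hc0 : j = 0 := by omega
              obtain ⟨x, hx⟩ := List.length_eq_one_iff.1 (show lam.length = 1 by omega)
              apply hspec
              rw [hx]
              rw [hx, hc0] at hlast
              simp only [List.getD_cons_zero] at hlast
              simp [hlast]
            have hgetlast : lam.getLastD 0 = 1 := by
              rw [getLastD_eq_getD, hL, Nat.add_sub_cancel]
              exact hlast
            rw [if_pos ⟨hne, hgetlast, rfl⟩]
            set ν := lam.dropLast with hν
            have hνlen : ν.length = j := by rw [hν]; simp [hL]
            have hνne : ν ≠ [] := by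
              intro hc; rw [hc] at hνlen; simp at hνlen; omega
            have hνget : ∀ i, i < j → ν.getD i 0 = lam.getD i 0 := by
              intro i hi; rw [hν]; exact getD_dropLast lam (by omega)
            have hνpos : ∀ x ∈ ν, 0 < x := fun x hx =>
              hpos x ((List.dropLast_sublist lam).subset hx)
            have hνcon : ∀ i, i + 1 < ν.length → ρ i ≤ ν.getD i 0 := by
              intro i hi
              rw [hνlen] at hi
              rw [hνget i (by omega)]
              exact hcon i (by omega)
            have hνsum : ν.sum = n := by
              have h5 := dropLast_drop_sum lam hne (show (0:ℕ) ≤ lam.length - 1 by omega)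
              simp only [List.drop_zero] at h5
              rw [hgetlast] at h5
              rw [hν]
              omega
            rw [ih ν hνne hνpos hνcon hνsum]
            have hstep : stepProb ρ P ν j = 1 - ∑ i ∈ Finset.range j, P i := by
              unfold stepProb
              rw [if_neg (by omega : ¬(j + 1 < ν.length)),
                if_neg (by omega : ¬(j + 1 = ν.length)),
                if_pos (by omega : j = ν.length), if_neg hνne]
              rw [if_pos]
              rw [getLastD_eq_getD, hνlen]
              rw [hνget (j-1) (by omega)]
              exact hcon (j-1) (by omega)
            rw [hstep]
            obtain ⟨M, hM⟩ : ∃ M, j = M + 1 := ⟨j - 1, by omega⟩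
            rw [rhsF_eq ρ P ν (by rw [hνlen, hM])]
            have hνdropsum : ∀ i, i < j → (ν.drop i).sum + 1 = (lam.drop i).sum := by
              intro i hi
              have h5 := dropLast_drop_sum lam hne (show i ≤ lam.length - 1 by omega)
              rw [hgetlast] at h5
              rw [hν]
              omega
            have hbin1 : (∏ i ∈ Finset.range M,
                ((((ν.drop i).sum - ρ i).choose (ν.getD i 0 - ρ i) : ℕ) : ℝ))
                = ((∏ i ∈ Finset.range M,
                  ((lam.drop i).sum - ρ i - 1).choose (lam.getD i 0 - ρ i) : ℕ) : ℝ) := by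
              rw [← Nat.cast_prod]
              congr 1
              apply Finset.prod_congr rfl
              intro i hi
              have hiM : i < M := Finset.mem_range.1 hi
              have hd := hνdropsum i (by omega)
              have e1 : (ν.drop i).sum - ρ i = (lam.drop i).sum - ρ i - 1 := by omega
              rw [e1, hνget i (by omega)]
            have hbin2 : (∏ i ∈ Finset.range j,
                ((lam.drop i).sum - ρ i - 1).choose (lam.getD i 0 - ρ i))
                = ∏ i ∈ Finset.range M,
                  ((lam.drop i).sum - ρ i - 1).choose (lam.getD i 0 - ρ i) := by
              rw [hM, Finset.prod_range_succ]
              have hd := hdropsucc M (by omega)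
              have hd2 : (lam.drop (M+1)).sum = lam.getD j 0 := by rw [← hM]; exact hlamL
              have e1 : (lam.drop M).sum - ρ M - 1 = lam.getD M 0 - ρ M := by
                have := hcon' M (by omega)
                omega
              rw [e1, Nat.choose_self, mul_one]
            have hE2 : (∏ i ∈ Finset.range j,
                (1 - ∑ x ∈ Finset.range i, P x) ^ ρ i * P i ^ (lam.getD i 0 - ρ i))
                = (∏ i ∈ Finset.range M,
                  (1 - ∑ x ∈ Finset.range i, P x) ^ ρ i * P i ^ (lam.getD i 0 - ρ i)) *
                  ((1 - ∑ x ∈ Finset.range M, P x) ^ ρ M * P M ^ (lam.getD M 0 - ρ M)) := by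
              rw [hM, Finset.prod_range_succ]
            have hEν : (∏ i ∈ Finset.range M,
                (1 - ∑ x ∈ Finset.range i, P x) ^ ρ i * P i ^ (ν.getD i 0 - ρ i))
                = ∏ i ∈ Finset.range M,
                  (1 - ∑ x ∈ Finset.range i, P x) ^ ρ i * P i ^ (lam.getD i 0 - ρ i) := by
              apply Finset.prod_congr rfl
              intro i hi
              rw [hνget i (by have := Finset.mem_range.1 hi; omega)]
            rw [hbin1, hbin2, hE2, hEν]
            rw [hνget M (by omega), min_eq_left (hcon' M (by omega)), hlast,
              min_eq_right (hρ j), Nat.sub_eq_zero_of_le (hρ j), pow_zero, pow_one]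
            ring
          · -- last block has at least two elements
            have h2le : 2 ≤ lam.getD j 0 := by
              have := hgd j (by omega)
              omega
            rw [if_neg (show ¬(lam ≠ [] ∧ lam.getLastD 0 = 1 ∧ j = j) from fun hc => by
              apply hlast
              have := hc.2.1
              rwa [getLastD_eq_getD, hL, Nat.add_sub_cancel] at this), add_zero]
            rw [if_pos (show 1 ≤ lam.getD j 0 ∧ j < j + 1 from ⟨hgd j (by omega), by omega⟩)]
            set ν := lam.set j (lam.getD j 0 - 1) with hν
            have hνlen : ν.length = j + 1 := by rw [hν]; simp [hL]
            have hνne : ν ≠ [] := by intro hc; rw [hc] at hνlen; simp at hνlen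
            have hνpos : ∀ x ∈ ν, 0 < x := by
              intro x hx
              rcases List.mem_or_eq_of_mem_set hx with h | h
              · exact hpos x h
              · omega
            have hνget : ∀ i, i ≠ j → ν.getD i 0 = lam.getD i 0 :=
              fun i hi => getD_set_ne lam (fun h => hi h.symm) _
            have hνgetj : ν.getD j 0 = lam.getD j 0 - 1 := getD_set_self lam (by omega) _
            have hνcon : ∀ i, i + 1 < ν.length → ρ i ≤ ν.getD i 0 := by
              intro i hi
              rw [hνlen] at hi
              rw [hνget i (by omega)]
              exact hcon i (by omega)
            have hνsum : ν.sum = n := by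
              have h5 := sum_set_getD lam (show j < lam.length by omega) (lam.getD j 0 - 1)
              rw [← hν] at h5
              omega
            rw [ih ν hνne hνpos hνcon hνsum]
            have hνdrop : ∀ i, i ≤ j → (ν.drop i).sum + 1 = (lam.drop i).sum := by
              intro i hi
              have h5 := drop_set_sum lam hi (show j < lam.length by omega)
                (v := lam.getD j 0 - 1)
              rw [← hν] at h5
              omega
            rw [rhsF_eq ρ P ν hνlen]
            have hbin : (∏ i ∈ Finset.range j,
                ((((ν.drop i).sum - ρ i).choose (ν.getD i 0 - ρ i) : ℕ) : ℝ))
                = ((∏ i ∈ Finset.range j,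
                  ((lam.drop i).sum - ρ i - 1).choose (lam.getD i 0 - ρ i) : ℕ) : ℝ) := by
              rw [← Nat.cast_prod]
              congr 1
              apply Finset.prod_congr rfl
              intro i hi
              have hij : i < j := Finset.mem_range.1 hi
              have hd := hνdrop i (by omega)
              have e1 : (ν.drop i).sum - ρ i = (lam.drop i).sum - ρ i - 1 := by omega
              rw [e1, hνget i (by omega)]
            have hEν : (∏ i ∈ Finset.range j,
                (1 - ∑ x ∈ Finset.range i, P x) ^ ρ i * P i ^ (ν.getD i 0 - ρ i))
                = ∏ i ∈ Finset.range j,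
                  (1 - ∑ x ∈ Finset.range i, P x) ^ ρ i * P i ^ (lam.getD i 0 - ρ i) := by
              apply Finset.prod_congr rfl
              intro i hi
              rw [hνget i (by have := Finset.mem_range.1 hi; omega)]
            rw [hbin, hEν, hνgetj]
            have hstep : stepProb ρ P ν j =
                if lam.getD j 0 - 1 < ρ j then 1 - ∑ i ∈ Finset.range j, P i else P j := by
              unfold stepProb
              rw [if_neg (by omega : ¬(j + 1 < ν.length)),
                if_pos (by omega : j + 1 = ν.length)]
              rw [getLastD_eq_getD, hνlen, Nat.add_sub_cancel, hνgetj]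
            rw [hstep]
            by_cases hfull : lam.getD j 0 - 1 < ρ j
            · rw [if_pos hfull]
              rw [min_eq_right (by omega : lam.getD j 0 - 1 ≤ ρ j),
                min_eq_right (by omega : lam.getD j 0 ≤ ρ j),
                (by omega : lam.getD j 0 - 1 - ρ j = 0),
                (by omega : lam.getD j 0 - ρ j = 0), pow_zero]
              have hp : (1 - ∑ x ∈ Finset.range j, P x) ^ (lam.getD j 0)
                  = (1 - ∑ x ∈ Finset.range j, P x) ^ (lam.getD j 0 - 1) *
                    (1 - ∑ x ∈ Finset.range j, P x) := by
                rw [← pow_succ]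
                congr 1
                omega
              rw [hp]
              ring
            · rw [if_neg hfull]
              rw [min_eq_left (by omega : ρ j ≤ lam.getD j 0 - 1),
                min_eq_left (by omega : ρ j ≤ lam.getD j 0)]
              have hp : P j ^ (lam.getD j 0 - ρ j)
                  = P j ^ (lam.getD j 0 - 1 - ρ j) * P j := by
                rw [← pow_succ]
                congr 1
                omega
              rw [hp]
              ring
      rw [Finset.sum_congr rfl hC, ← Finset.sum_mul, ← Nat.cast_sum]
      have htel : (∑ j ∈ Finset.range (L+1),
          (if j < L then
              (if 1 ≤ lam.getD j 0 - ρ j then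
                (∏ i ∈ Finset.range j, ((lam.drop i).sum - ρ i - 1).choose (lam.getD i 0 - ρ i)) *
                  (((lam.drop j).sum - ρ j - 1).choose (lam.getD j 0 - ρ j - 1)) *
                  (∏ i ∈ Finset.Ico (j+1) (L:ℕ), ((lam.drop i).sum - ρ i).choose (lam.getD i 0 - ρ i))
               else 0)
            else ∏ i ∈ Finset.range L, ((lam.drop i).sum - ρ i - 1).choose (lam.getD i 0 - ρ i)))
          = ∏ i ∈ Finset.range L, ((lam.drop i).sum - ρ i).choose (lam.getD i 0 - ρ i) := by
        rw [Finset.sum_range_succ, if_neg (lt_irrefl L)]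
        rw [Finset.sum_congr rfl (fun j hj => if_pos (Finset.mem_range.1 hj))]
        exact telescope L (fun i => (lam.drop i).sum - ρ i) (fun i => lam.getD i 0 - ρ i) hN1
      rw [htel, rhsF_eq ρ P lam hL, Nat.cast_prod]
      ring

/-- The probability that the sequential construction driven by frequencies
`(P_1,…,P_ℓ)` produces a partition of `[n]` of constrained shape `λ` equals
`d(λ)·[∏_{j=1}^{ℓ-1} H_{j-1}^{ρ_j} P_j^{λ_j-ρ_j}]·H_{ℓ-1}^{min(ρ_ℓ,λ_ℓ)}·P_ℓ^{(λ_ℓ-ρ_ℓ)_+}`. -/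
theorem sequential_construction_shape_probability (ρ : ℕ → ℕ)
    (hρ : ∀ j, 1 ≤ ρ j) (P : ℕ → ℝ) (lam : List ℕ) (hne : lam ≠ [])
    (hpos : ∀ x ∈ lam, 0 < x)
    (hcon : ∀ j, j + 1 < lam.length → ρ j ≤ lam.getD j 0)
    (hP0 : ∀ j < lam.length, 0 ≤ P j)
    (hP1 : ∑ i ∈ Finset.range lam.length, P i ≤ 1) :
    shapeProb ρ P lam.sum lam =
      (∏ j ∈ Finset.range (lam.length - 1),
          ((((lam.drop j).sum - ρ j).choose (lam.getD j 0 - ρ j) : ℕ) : ℝ)) *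
        (∏ j ∈ Finset.range (lam.length - 1),
          (1 - ∑ i ∈ Finset.range j, P i) ^ ρ j * P j ^ (lam.getD j 0 - ρ j)) *
        (1 - ∑ i ∈ Finset.range (lam.length - 1), P i) ^
          min (ρ (lam.length - 1)) (lam.getD (lam.length - 1) 0) *
        P (lam.length - 1) ^ (lam.getD (lam.length - 1) 0 - ρ (lam.length - 1)) := by
  have h := main_lemma ρ hρ P lam.sum lam hne hpos hcon rfl
  unfold rhsF at h
  exact h
end
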